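/- arXiv:1603.07708 — 7 statements merged into one kernel-verified Lean document; each statement's English description precedes it below -/
import Mathlib

section
/- Let p be a prime. Every coefficient of the Artin–Hasse exponential E_p(x) = exp(∑_{n≥0} x^{p^n}/p^n) ∈ ℚ[[x]] is p-integral, i.e., lies in the localization ℤ_(p) of ℤ at p; consequently E_p may be regarded as a formal power series with coefficients in ℤ_p. -/
open scoped Classical

/-- The formal power series `∑_{n≥0} x^{p^n}/p^n ∈ ℚ[[x]]`; its coefficient at
exponent `N = p^m` is `1/p^m = 1/N`, and all other coefficients vanish. -/
noncomputable def artinHasseLog (p : ℕ) : PowerSeries ℚ :=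
  PowerSeries.mk fun N => if ∃ m : ℕ, N = p ^ m then (N : ℚ)⁻¹ else 0

/-- The `n`-th coefficient of the Artin--Hasse exponential
`E_p(x) = exp(∑_{n≥0} x^{p^n}/p^n) = ∑_{k≥0} (∑_{n≥0} x^{p^n}/p^n)^k / k!`.
Since `artinHasseLog p` has zero constant term, only the terms with `k ≤ n`
contribute to the coefficient of `x^n`. -/
noncomputable def artinHasseCoeff (p n : ℕ) : ℚ :=
  ∑ k ∈ Finset.range (n + 1),
    (Nat.factorial k : ℚ)⁻¹ * PowerSeries.coeff (R := ℚ) n (artinHasseLog p ^ k)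

/-- The Artin--Hasse exponential `E_p(x) ∈ ℚ[[x]]`. -/
noncomputable def artinHasse (p : ℕ) : PowerSeries ℚ :=
  PowerSeries.mk (artinHasseCoeff p)

/-! Write `E` for the Artin–Hasse exponential and `L = ∑ x^{p^n}/p^n`. Since
`p L(x) = p x + L(x^p)`, the series `E(x)^p` and `exp(p x) E(x^p)` satisfy the same linear
differential equation with the same constant term, hence `E(x)^p = exp(p x) E(x^p)`, and
`exp(p x) ≡ 1 mod p` because `p^i / i! ∈ p ℤ_p` for `i ≥ 1`. If the coefficients `a_j` of `E`
are `p`-integral for `j < n` and `T` is the truncation of `E` below degree `n`, then the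
coefficient of `x^n` in `E^p` is that of `T^p` plus `p a_n`, while `T(x)^p ≡ T(x^p) mod p` by
Frobenius. Comparing both sides gives `p a_n ≡ 0 mod p`, so `a_n` is `p`-integral. -/

open PowerSeries

namespace PowerSeries

variable {R : Type*} [CommRing R]

theorem derivative_expand (p : ℕ) (hp : p ≠ 0) (f : R⟦X⟧) :
    d⁄dX R (expand p hp f) = (p : R⟦X⟧) * X ^ (p - 1) * expand p hp (d⁄dX R f) := by
  rw [expand_apply, expand_apply, derivative_subst (.X_pow hp), derivative_pow, derivative_X]
  ring

theorem derivative_rescale (a : R) (f : R⟦X⟧) :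
    d⁄dX R (rescale a f) = C a * rescale a (d⁄dX R f) := by
  ext n
  simp only [coeff_derivative, coeff_rescale, coeff_C_mul]
  ring

theorem eq_of_derivative_eq_mul_self [IsAddTorsionFree R] {f g h : R⟦X⟧}
    (hf : d⁄dX R f = h * f) (hg : d⁄dX R g = h * g) (h0 : constantCoeff f = constantCoeff g) :
    f = g := by
  ext n
  induction n using Nat.strong_induction_on with
  | _ n ih =>
    cases n with
    | zero => simpa using h0
    | succ m =>
      have hd : coeff m (d⁄dX R f) = coeff m (d⁄dX R g) := by
        rw [hf, hg, coeff_mul, coeff_mul]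
        refine Finset.sum_congr rfl fun x hx => ?_
        rw [ih x.2 (by have := Finset.HasAntidiagonal.mem_antidiagonal.mp hx; omega)]
      rw [coeff_derivative, coeff_derivative, ← Nat.cast_succ, mul_comm, ← nsmul_eq_mul,
        mul_comm, ← nsmul_eq_mul] at hd
      exact (smul_right_inj (Nat.succ_ne_zero m)).mp hd

theorem coeff_pow_sub_pow_of_coeff_eq {f g : R⟦X⟧} {n : ℕ}
    (hfg : ∀ i < n, coeff i f = coeff i g) (hf : constantCoeff f = 1)
    (hg : constantCoeff g = 1) (k : ℕ) :
    coeff n (f ^ k - g ^ k) = k * coeff n (f - g) := by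
  obtain ⟨r, hr⟩ : X ^ n ∣ f - g :=
    X_pow_dvd_iff.mpr fun i hi => by rw [map_sub, hfg i hi, sub_self]
  rw [← geom_sum₂_mul, hr, mul_left_comm]
  simp [coeff_X_pow_mul', hf, hg]

theorem coeff_pow_sub_coeff_trunc_pow {f : R⟦X⟧} (hf : constantCoeff f = 1) {n : ℕ}
    (hn : 0 < n) (k : ℕ) : coeff n (f ^ k) - (trunc n f ^ k).coeff n = k * coeff n f := by
  have hfT : ∀ i < n, coeff i f = coeff i (trunc n f : R⟦X⟧) := fun i hi => by
    rw [Polynomial.coeff_coe, coeff_trunc, if_pos hi]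
  have hT : constantCoeff (trunc n f : R⟦X⟧) = 1 := by
    rw [← coeff_zero_eq_constantCoeff_apply, ← hfT 0 hn, coeff_zero_eq_constantCoeff_apply, hf]
  rw [← Polynomial.coeff_coe, Polynomial.coe_pow, ← map_sub,
    coeff_pow_sub_pow_of_coeff_eq hfT hf hT, map_sub, Polynomial.coeff_coe, coeff_trunc,
    if_neg (lt_irrefl n), sub_zero]

theorem norm_coeff_mul_le {K : Type*} [NormedRing K] [IsUltrametricDist K]
    {f g : K⟦X⟧} {n : ℕ} {a b : ℝ} (hf : ∀ i ≤ n, ‖coeff i f‖ ≤ a)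
    (hg : ∀ j ≤ n, ‖coeff j g‖ ≤ b) : ‖coeff n (f * g)‖ ≤ a * b := by
  rw [coeff_mul]
  refine IsUltrametricDist.norm_sum_le_of_forall_le_of_nonempty ⟨(0, n), by simp⟩ ?_
  intro x hx
  have hx := Finset.HasAntidiagonal.mem_antidiagonal.mp hx
  exact (norm_mul_le _ _).trans (mul_le_mul (hf _ (by omega)) (hg _ (by omega))
    (norm_nonneg _) ((norm_nonneg _).trans (hf 0 (Nat.zero_le n))))

end PowerSeries

theorem constantCoeff_artinHasseLog (p : ℕ) : constantCoeff (artinHasseLog p) = 0 := by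
  rw [← coeff_zero_eq_constantCoeff_apply, artinHasseLog, coeff_mk]
  split_ifs <;> simp

theorem artinHasse_eq_subst_exp (p : ℕ) : artinHasse p = (exp ℚ).subst (artinHasseLog p) := by
  have hL := HasSubst.of_constantCoeff_zero' (constantCoeff_artinHasseLog p)
  ext n
  have hvanish : ∀ k, n < k → coeff n (artinHasseLog p ^ k) = 0 := fun k hk =>
    X_pow_dvd_iff.mp (pow_dvd_pow_of_dvd (X_dvd_iff.mpr (constantCoeff_artinHasseLog p)) k) n hk
  rw [artinHasse, coeff_mk, artinHasseCoeff, coeff_subst' hL,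
    finsum_eq_sum_of_support_subset _ (s := Finset.range (n + 1)) ?_]
  · refine Finset.sum_congr rfl fun k _ => ?_
    simp [coeff_exp]
  · intro k hk
    by_contra hkn
    simp only [Finset.coe_range, Set.mem_Iio, not_lt] at hkn
    exact hk (by simp only [hvanish k hkn, smul_zero])

theorem derivative_artinHasse (p : ℕ) :
    d⁄dX ℚ (artinHasse p) = d⁄dX ℚ (artinHasseLog p) * artinHasse p := by
  rw [artinHasse_eq_subst_exp, derivative_subst
    (HasSubst.of_constantCoeff_zero' (constantCoeff_artinHasseLog p)), derivative_exp, mul_comm]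

theorem constantCoeff_artinHasse (p : ℕ) : constantCoeff (artinHasse p) = 1 := by
  rw [← coeff_zero_eq_constantCoeff_apply, artinHasse, coeff_mk]
  simp [artinHasseCoeff]

theorem natCast_mul_artinHasseLog {p : ℕ} (hp : 1 < p) :
    (p : ℚ⟦X⟧) * artinHasseLog p =
      (p : ℚ⟦X⟧) * X + expand p (Nat.ne_zero_of_lt hp) (artinHasseLog p) := by
  ext N
  rw [map_add, ← map_natCast (C (R := ℚ)), coeff_C_mul, coeff_C_mul, coeff_X, coeff_expand,
    artinHasseLog, coeff_mk, coeff_mk]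
  by_cases hdvd : p ∣ N
  · obtain ⟨k, rfl⟩ := hdvd
    have hk1 : p * k ≠ 1 := fun h => hp.ne' (Nat.eq_one_of_mul_eq_one_right h)
    rw [if_pos (dvd_mul_right p k), Nat.mul_div_cancel_left _ (by omega), if_neg hk1, mul_zero,
      zero_add]
    by_cases hk : ∃ m, k = p ^ m
    · obtain ⟨m, rfl⟩ := hk
      rw [if_pos ⟨m + 1, by ring⟩, if_pos ⟨m, rfl⟩]
      have : (p : ℚ) ≠ 0 := by exact_mod_cast (Nat.ne_zero_of_lt hp)
      push_cast
      field_simp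
    · have hpk : ¬ ∃ m, p * k = p ^ m := by
        rintro ⟨_ | m, hm⟩
        · exact hk1 hm
        · exact hk ⟨m, Nat.eq_of_mul_eq_mul_left (Nat.zero_lt_of_lt hp) (by rw [hm, pow_succ'])⟩
      rw [if_neg hpk, if_neg hk, mul_zero]
  · rw [if_neg hdvd, add_zero]
    by_cases hN : N = 1
    · subst hN
      rw [if_pos ⟨0, rfl⟩, if_pos rfl]
      simp
    · have hpN : ¬ ∃ m, N = p ^ m := by
        rintro ⟨_ | m, rfl⟩
        · exact hN rfl
        · exact hdvd (dvd_pow_self p m.succ_ne_zero)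
      rw [if_neg hpN, if_neg hN, mul_zero]

theorem artinHasse_pow {p : ℕ} (hp : 1 < p) :
    artinHasse p ^ p =
      rescale (p : ℚ) (exp ℚ) * expand p (Nat.ne_zero_of_lt hp) (artinHasse p) := by
  have hlog : (p : ℚ⟦X⟧) * d⁄dX ℚ (artinHasseLog p) = (p : ℚ⟦X⟧) +
      (p : ℚ⟦X⟧) * X ^ (p - 1) * expand p (Nat.ne_zero_of_lt hp) (d⁄dX ℚ (artinHasseLog p)) := by
    simpa [Derivation.leibniz, derivative_expand] using
      congrArg (d⁄dX ℚ) (natCast_mul_artinHasseLog hp)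
  refine eq_of_derivative_eq_mul_self (h := (p : ℚ⟦X⟧) * d⁄dX ℚ (artinHasseLog p)) ?_ ?_ ?_
  · rw [derivative_pow, derivative_artinHasse, ← pow_sub_one_mul (Nat.ne_zero_of_lt hp)]
    ring
  · rw [Derivation.leibniz, derivative_rescale, derivative_exp, derivative_expand,
      derivative_artinHasse, map_mul, map_natCast, smul_eq_mul, smul_eq_mul]
    linear_combination
      -(rescale (p : ℚ) (exp ℚ) * expand p (Nat.ne_zero_of_lt hp) (artinHasse p)) * hlog
  · rw [map_pow, map_mul, constantCoeff_expand, constantCoeff_artinHasse,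
      ← coeff_zero_eq_constantCoeff_apply, coeff_rescale]
    simp

section Padic

variable {p : ℕ} [hp : Fact p.Prime]

theorem PadicInt.norm_coeff_pow_sub_expand_le (f : Polynomial ℤ_[p]) (n : ℕ) :
    ‖(f ^ p - Polynomial.expand ℤ_[p] p f).coeff n‖ ≤ (p : ℝ)⁻¹ := by
  have hker : (f ^ p - Polynomial.expand ℤ_[p] p f).coeff n ∈ RingHom.ker toZMod := by
    rw [RingHom.mem_ker, ← Polynomial.coeff_map, Polynomial.map_sub, Polynomial.map_pow,
      Polynomial.map_expand, ZMod.expand_card, sub_self, Polynomial.coeff_zero]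
  rw [ker_toZMod, maximalIdeal_eq_span_p, ← pow_one (p : ℤ_[p]),
    ← norm_le_pow_iff_mem_span_pow] at hker
  simpa using hker

theorem Padic.norm_coeff_pow_sub_expand_le {f : Polynomial ℚ_[p]} (hf : ∀ i, ‖f.coeff i‖ ≤ 1)
    (n : ℕ) : ‖(f ^ p - Polynomial.expand ℚ_[p] p f).coeff n‖ ≤ (p : ℝ)⁻¹ := by
  obtain ⟨g, rfl⟩ := (Polynomial.mem_lifts (f := PadicInt.Coe.ringHom) f).mp <|
    (Polynomial.lifts_iff_coeff_lifts f).mpr fun i => ⟨⟨_, hf i⟩, rfl⟩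
  rw [← Polynomial.map_pow, ← Polynomial.map_expand, ← Polynomial.map_sub,
    Polynomial.coeff_map]
  exact PadicInt.norm_coeff_pow_sub_expand_le g n

theorem Padic.norm_coeff_rescale_exp_sub_one_le (i : ℕ) :
    ‖coeff i (rescale (p : ℚ_[p]) (exp ℚ_[p]) - 1)‖ ≤ (p : ℝ)⁻¹ := by
  rw [map_sub, coeff_rescale, coeff_exp, coeff_one]
  rcases Nat.eq_zero_or_pos i with rfl | hi
  · simp
  have hv : padicValNat p i.factorial < i :=
    lt_of_le_of_lt (Nat.le_mul_of_pos_left _ (Nat.sub_pos_of_lt hp.out.one_lt))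
      (sub_one_mul_padicValNat_factorial_lt_of_ne_zero (p := p) hi.ne')
  have hfac : ‖(i.factorial : ℚ_[p])‖ = (p : ℝ) ^ (-(padicValNat p i.factorial : ℤ)) := by
    rw [norm_eq_zpow_neg_valuation (by exact_mod_cast i.factorial_ne_zero), valuation_natCast]
  rw [if_neg hi.ne', sub_zero, map_div₀,
    map_one, map_natCast, norm_mul, norm_div, norm_one, hfac, norm_pow, norm_p]
  have hp0 : (p : ℝ) ≠ 0 := by exact_mod_cast hp.out.ne_zero
  rw [one_div, zpow_neg, inv_inv, inv_pow, ← zpow_natCast, ← zpow_neg, ← zpow_add₀ hp0,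
    ← zpow_neg_one]
  exact zpow_le_zpow_right₀ (by exact_mod_cast hp.out.one_lt.le) (by omega)

/-- One direction of Dwork's lemma. -/
theorem Padic.norm_coeff_le_one_of_pow_eq_mul_expand {F G : ℚ_[p]⟦X⟧}
    (hF : constantCoeff F = 1) (hG : ∀ i, ‖coeff i (G - 1)‖ ≤ (p : ℝ)⁻¹)
    (hFG : F ^ p = G * expand p hp.out.ne_zero F) (n : ℕ) : ‖coeff n F‖ ≤ 1 := by
  induction n using Nat.strong_induction_on with
  | _ n ih =>
  rcases Nat.eq_zero_or_pos n with rfl | hn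
  · simp [hF]
  set T := trunc n F
  have hT : ∀ i, ‖T.coeff i‖ ≤ 1 := fun i => by
    rw [coeff_trunc]
    split_ifs with hi
    · exact ih i hi
    · simp
  have hexpand : coeff n (expand p hp.out.ne_zero F) = (Polynomial.expand ℚ_[p] p T).coeff n := by
    rw [coeff_expand, Polynomial.coeff_expand hp.out.pos, coeff_trunc,
      if_pos (Nat.div_lt_self hn hp.out.one_lt)]
  have hG_expand : ‖coeff n ((G - 1) * expand p hp.out.ne_zero F)‖ ≤ (p : ℝ)⁻¹ := by
    rw [← mul_one (p : ℝ)⁻¹]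
    refine norm_coeff_mul_le (fun i _ => hG i) fun j hj => ?_
    rw [coeff_expand]
    split_ifs
    · exact ih _ ((Nat.div_le_div_right hj).trans_lt (Nat.div_lt_self hn hp.out.one_lt))
    · simp
  have hfrob : ‖(Polynomial.expand ℚ_[p] p T - T ^ p).coeff n‖ ≤ (p : ℝ)⁻¹ := by
    rw [← norm_neg, ← Polynomial.coeff_neg, neg_sub]
    exact Padic.norm_coeff_pow_sub_expand_le hT n
  have hsum : (p : ℚ_[p]) * coeff n F = coeff n ((G - 1) * expand p hp.out.ne_zero F) +
      (Polynomial.expand ℚ_[p] p T - T ^ p).coeff n := by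
    rw [← coeff_pow_sub_coeff_trunc_pow hF hn, hFG, sub_one_mul, map_sub, hexpand,
      Polynomial.coeff_sub]
    ring
  have := (IsUltrametricDist.norm_add_le_max _ _).trans (max_le hG_expand hfrob)
  rw [← hsum, norm_mul, norm_p] at this
  exact le_of_mul_le_mul_left (by simpa using this) (by simp [hp.out.pos])

theorem Padic.not_dvd_den_of_norm_le_one {q : ℚ} (hq : ‖(q : ℚ_[p])‖ ≤ 1) : ¬ p ∣ q.den := by
  rw [← PadicInt.norm_natCast_lt_one_iff, PadicInt.isUnit_iff.mp (PadicInt.isUnit_den q hq)]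
  exact lt_irrefl 1

theorem norm_coeff_artinHasse_le_one (n : ℕ) : ‖((coeff n (artinHasse p) : ℚ) : ℚ_[p])‖ ≤ 1 := by
  have hFG : map (Rat.castHom ℚ_[p]) (artinHasse p) ^ p = rescale (p : ℚ_[p]) (exp ℚ_[p]) *
      expand p hp.out.ne_zero (map (Rat.castHom ℚ_[p]) (artinHasse p)) := by
    rw [← map_pow, artinHasse_pow hp.out.one_lt, map_mul, map_expand, ← rescale_map, map_exp,
      map_natCast]
  have hF : constantCoeff (map (Rat.castHom ℚ_[p]) (artinHasse p)) = 1 := by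
    rw [← coeff_zero_eq_constantCoeff_apply, coeff_map, coeff_zero_eq_constantCoeff_apply,
      constantCoeff_artinHasse, map_one]
  simpa using Padic.norm_coeff_le_one_of_pow_eq_mul_expand hF
    Padic.norm_coeff_rescale_exp_sub_one_le hFG n

end Padic

/-- Every coefficient of the Artin--Hasse exponential is `p`-integral: its
denominator is prime to `p` (i.e. it lies in the localization `ℤ_(p)` of `ℤ` at `p`),
and consequently it has `p`-adic norm at most `1`, so that `E_p` may be regarded as a
formal power series with coefficients in `ℤ_p`. -/
theorem artinHasse_coeff_p_integral (p : ℕ) [hp : Fact p.Prime] :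
    ∀ n : ℕ, ¬ p ∣ (PowerSeries.coeff (R := ℚ) n (artinHasse p)).den ∧
      ‖((PowerSeries.coeff (R := ℚ) n (artinHasse p) : ℚ) : ℚ_[p])‖ ≤ 1 := fun n =>
  ⟨Padic.not_dvd_den_of_norm_le_one (norm_coeff_artinHasse_le_one n),
    norm_coeff_artinHasse_le_one n⟩
end

section
/- Let p be a prime, l a finite field of characteristic p, and a, b ∈ l. Then [a] + [b] − [a+b] is divisible by p in W(l), and there exists a (necessarily unique) sequence (δ_n)_{n≥0} of elements of W(l) such that p·δ_0 = [a] + [b] − [a+b] and, for every n ≥ 1, p^n·δ_n = φ^n(δ_0) − ∑_{i=0}^{n−1} p^i δ_i^{p^{n−i}}; in particular, for each n ≥ 1 the element φ^n(δ_0) − ∑_{i=0}^{n−1} p^i δ_i^{p^{n−i}} is divisible by p^n in W(l). -/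
/-!
Let `φ` be a Frobenius lift, `p ∣ φ x - x ^ p`, and write `rₙ(δ) = φⁿ(δ₀) - ∑_{i<n} pⁱ δᵢ^{p^{n-i}}`,
so that the recursion reads `pⁿ δₙ = rₙ(δ)`. Expanding `r_{n+1}(δ)` around `φ(rₙ(δ))` gives
`r_{n+1}(δ) = φ(rₙ(δ) - pⁿ δₙ) + ∑_{i≤n} pⁱ (φ(δᵢ)^{p^{n-i}} - (δᵢ^p)^{p^{n-i}})`, and each summand is
divisible by `p^{n+1}` because `p ∣ a - b` implies `p^{k+1} ∣ a^{p^k} - b^{p^k}`. Hence once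
`pⁿ δₙ = rₙ(δ)` holds, `r_{n+1}(δ)` is divisible by `p^{n+1}` and `δ_{n+1}` can be chosen; uniqueness
is cancellation of powers of `p`. In `W(l)` the Frobenius is such a lift, and `p`-divisibility of
`φ x - x ^ p` and of `[a] + [b] - [a + b]` is vanishing of the constant coefficient.
-/

open Finset

namespace FrobeniusLift

variable {R : Type*} [CommRing R] (φ : R →+* R) (p : ℕ)

noncomputable def remainder (δ : ℕ → R) (n : ℕ) : R :=
  φ^[n] (δ 0) - ∑ i ∈ range n, (p : R) ^ i * δ i ^ p ^ (n - i)

variable {φ p}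

lemma remainder_zero (δ : ℕ → R) : remainder φ p δ 0 = δ 0 := by
  simp [remainder]

lemma remainder_congr {δ δ' : ℕ → R} {n : ℕ} (h₀ : δ 0 = δ' 0) (h : ∀ i < n, δ i = δ' i) :
    remainder φ p δ n = remainder φ p δ' n := by
  rw [remainder, remainder, h₀, sum_congr rfl fun i hi => by rw [h i (mem_range.mp hi)]]

lemma remainder_succ (δ : ℕ → R) (n : ℕ) :
    remainder φ p δ (n + 1) = φ (remainder φ p δ n) - (p : R) ^ n * φ (δ n) +
      ∑ i ∈ range (n + 1), (p : R) ^ i * (φ (δ i) ^ p ^ (n - i) - (δ i ^ p) ^ p ^ (n - i)) := by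
  have hpow : ∀ i ∈ range (n + 1), (δ i ^ p) ^ p ^ (n - i) = δ i ^ p ^ (n + 1 - i) := by
    intro i hi
    rw [← pow_mul, ← pow_succ', Nat.sub_add_comm (mem_range_succ_iff.mp hi)]
  rw [sum_congr rfl fun i hi => by rw [hpow i hi]]
  simp only [remainder, mul_sub, sum_sub_distrib, map_sub, map_sum, map_mul, map_pow, map_natCast,
    Function.iterate_succ_apply']
  rw [sum_range_succ (fun i => (p : R) ^ i * φ (δ i) ^ p ^ (n - i)), Nat.sub_self, pow_zero, pow_one]
  ring

lemma pow_succ_dvd_remainder_succ (hφ : ∀ x, (p : R) ∣ φ x - x ^ p) {δ : ℕ → R} {n : ℕ}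
    (hn : (p : R) ^ n * δ n = remainder φ p δ n) :
    (p : R) ^ (n + 1) ∣ remainder φ p δ (n + 1) := by
  have hlead : φ (remainder φ p δ n) - (p : R) ^ n * φ (δ n) = 0 := by
    rw [← hn, map_mul, map_pow, map_natCast, sub_self]
  rw [remainder_succ, hlead, zero_add]
  refine dvd_sum fun i hi => ?_
  calc (p : R) ^ (n + 1) = (p : R) ^ i * (p : R) ^ (n - i + 1) := by
        rw [← pow_add, ← add_assoc, Nat.add_sub_cancel' (mem_range_succ_iff.mp hi)]
    _ ∣ _ := mul_dvd_mul_left _ (dvd_sub_pow_of_dvd_sub (hφ (δ i)) (n - i))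

variable (φ p) in
/-- The quotient is chosen arbitrarily when the division is not exact; `pow_mul_deltaSeq` shows
that this never happens for a Frobenius lift. -/
noncomputable def deltaSeq (d₀ : R) : ℕ → R
  | 0 => d₀
  | n + 1 => Classical.epsilon fun q : R => (p : R) ^ (n + 1) * q =
      φ^[n + 1] d₀ - ∑ i : Fin (n + 1), (p : R) ^ (i : ℕ) * deltaSeq d₀ i ^ p ^ (n + 1 - i)

lemma deltaSeq_zero (d₀ : R) : deltaSeq φ p d₀ 0 = d₀ := by
  rw [deltaSeq]

lemma pow_mul_deltaSeq_of_dvd {d₀ : R} {n : ℕ}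
    (h : (p : R) ^ (n + 1) ∣ remainder φ p (deltaSeq φ p d₀) (n + 1)) :
    (p : R) ^ (n + 1) * deltaSeq φ p d₀ (n + 1) = remainder φ p (deltaSeq φ p d₀) (n + 1) := by
  obtain ⟨q, hq⟩ := h
  rw [remainder, ← Fin.sum_univ_eq_sum_range, deltaSeq_zero] at hq ⊢
  rw [deltaSeq]
  exact Classical.epsilon_spec (⟨q, hq.symm⟩ : ∃ r : R, (p : R) ^ (n + 1) * r = _)

lemma pow_mul_deltaSeq (hφ : ∀ x, (p : R) ∣ φ x - x ^ p) (d₀ : R) (n : ℕ) :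
    (p : R) ^ n * deltaSeq φ p d₀ n = remainder φ p (deltaSeq φ p d₀) n := by
  induction n with
  | zero => rw [remainder_zero, pow_zero, one_mul]
  | succ n ih => exact pow_mul_deltaSeq_of_dvd (pow_succ_dvd_remainder_succ hφ ih)

lemma eq_of_pow_mul_eq_remainder (hp : IsLeftRegular (p : R)) {δ δ' : ℕ → R} (h₀ : δ 0 = δ' 0)
    (hδ : ∀ n, 1 ≤ n → (p : R) ^ n * δ n = remainder φ p δ n)
    (hδ' : ∀ n, 1 ≤ n → (p : R) ^ n * δ' n = remainder φ p δ' n) : δ = δ' := by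
  funext n
  induction n using Nat.strong_induction_on with
  | _ n ih =>
    rcases n.eq_zero_or_pos with rfl | hn
    · exact h₀
    · exact hp.pow n <| (hδ n hn).trans <| (remainder_congr h₀ ih).trans (hδ' n hn).symm

end FrobeniusLift

namespace WittVector

variable {p : ℕ} [Fact p.Prime] {k : Type*} [CommRing k] [CharP k p] [PerfectRing k p]

lemma p_dvd_iff_constantCoeff_eq_zero {x : WittVector p k} :
    (p : WittVector p k) ∣ x ↔ constantCoeff x = 0 := by
  rw [← Ideal.mem_span_singleton, ← ker_constantCoeff, RingHom.mem_ker]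

lemma p_dvd_frobenius_sub_pow (x : WittVector p k) : (p : WittVector p k) ∣ frobenius x - x ^ p := by
  rw [p_dvd_iff_constantCoeff_eq_zero, map_sub, map_pow, constantCoeff_apply, constantCoeff_apply,
    coeff_frobenius_charP, sub_self]

lemma p_dvd_teichmuller_add_sub_teichmuller_add (a b : k) :
    (p : WittVector p k) ∣ teichmuller p a + teichmuller p b - teichmuller p (a + b) := by
  rw [p_dvd_iff_constantCoeff_eq_zero, map_sub, map_add]
  simp only [constantCoeff_apply, teichmuller_coeff_zero, sub_self]

lemma isLeftRegular_p : IsLeftRegular (p : WittVector p k) :=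
  isLeftRegular_of_non_zero_divisor _ fun x hx => eq_zero_of_p_mul_eq_zero x (by rwa [mul_comm])

end WittVector

open FrobeniusLift WittVector in
/-- Let `p` be a prime, `l` a finite field of characteristic `p`, and `a, b ∈ l`.
Then `[a] + [b] − [a+b]` is divisible by `p` in `W(l)`, and there exists a
(necessarily unique) sequence `(δ_n)_{n≥0}` in `W(l)` such that
`p·δ_0 = [a] + [b] − [a+b]` and, for every `n ≥ 1`,
`p^n·δ_n = φ^n(δ_0) − ∑_{i=0}^{n−1} p^i δ_i^{p^{n−i}}`;
in particular, for each `n ≥ 1` the element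
`φ^n(δ_0) − ∑_{i=0}^{n−1} p^i δ_i^{p^{n−i}}` is divisible by `p^n` in `W(l)`.
Here `[·]` is the Teichmüller lift and `φ` the Frobenius of `W(l)`. -/
theorem wittVector_delta_sequence (p : ℕ) [hp : Fact p.Prime] (l : Type*) [Field l]
    [Finite l] [CharP l p] (a b : l) :
    ((p : WittVector p l) ∣
        (WittVector.teichmuller p a + WittVector.teichmuller p b -
          WittVector.teichmuller p (a + b))) ∧
      (∃! δ : ℕ → WittVector p l,
        (p : WittVector p l) * δ 0 =
            WittVector.teichmuller p a + WittVector.teichmuller p b -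
              WittVector.teichmuller p (a + b) ∧
          ∀ n : ℕ, 1 ≤ n →
            (p : WittVector p l) ^ n * δ n =
              (⇑(WittVector.frobenius : WittVector p l →+* WittVector p l))^[n] (δ 0) -
                ∑ i ∈ Finset.range n, (p : WittVector p l) ^ i * δ i ^ p ^ (n - i)) ∧
      ∀ δ : ℕ → WittVector p l,
        ((p : WittVector p l) * δ 0 =
            WittVector.teichmuller p a + WittVector.teichmuller p b -
              WittVector.teichmuller p (a + b) ∧
          ∀ n : ℕ, 1 ≤ n →
            (p : WittVector p l) ^ n * δ n =
              (⇑(WittVector.frobenius : WittVector p l →+* WittVector p l))^[n] (δ 0) -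
                ∑ i ∈ Finset.range n, (p : WittVector p l) ^ i * δ i ^ p ^ (n - i)) →
        ∀ n : ℕ, 1 ≤ n →
          (p : WittVector p l) ^ n ∣
            ((⇑(WittVector.frobenius : WittVector p l →+* WittVector p l))^[n] (δ 0) -
              ∑ i ∈ Finset.range n, (p : WittVector p l) ^ i * δ i ^ p ^ (n - i)) := by
  obtain ⟨d₀, hd₀⟩ := p_dvd_teichmuller_add_sub_teichmuller_add (p := p) a b
  have hφ := p_dvd_frobenius_sub_pow (p := p) (k := l)
  have hrec (n : ℕ) := pow_mul_deltaSeq hφ d₀ n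
  refine ⟨⟨d₀, hd₀⟩, ⟨deltaSeq frobenius p d₀, ⟨by rw [deltaSeq_zero, hd₀], fun n _ => hrec n⟩, ?_⟩,
    fun δ hδ n hn => ⟨δ n, (hδ.2 n hn).symm⟩⟩
  rintro δ ⟨hδ₀, hδ⟩
  have hδ₀d₀ : δ 0 = d₀ := isLeftRegular_p (hδ₀.trans hd₀)
  exact eq_of_pow_mul_eq_remainder isLeftRegular_p (by rw [hδ₀d₀, deltaSeq_zero]) hδ
    fun n _ => hrec n
end

section
/- Let p be a prime, M a finite extension of ℚ_p, and m a positive integer with p ∤ m and m < pe/(p−1). Then every p-th power in M^× that lies in 1 + π^m O_M already lies in 1 + π^{m+1} O_M; that is, (M^×)^p ∩ (1 + π^m O_M) ⊆ 1 + π^{m+1} O_M. -/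
/-! The norms of nonzero elements are the powers of `‖π‖`, so if the claim failed we would have
`‖x - 1‖ = ‖π‖ ^ m`. Write `x = y ^ p`; then `t = y - 1` has `‖t‖ ≤ 1`, say `‖t‖ = ‖π‖ ^ a`.
By the binomial theorem `x - 1 = t ^ p + s` with `‖s‖ ≤ ‖p‖ ‖t‖ = ‖π‖ ^ (e + a)`.
If `p a < e + a`, the term `t ^ p` dominates and `m = p a`; otherwise `m ≥ e + a` with
`(p - 1) a ≥ e`, whence `(p - 1) m ≥ p e`. -/

open Finset IsUltrametricDist

theorem isUltrametricDist_of_norm_algebraMap_eq {L K : Type*} [NormedField L] [IsUltrametricDist L]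
    [NormedField K] [Algebra L K] (hnorm : ∀ y : L, ‖algebraMap L K y‖ = ‖y‖) :
    IsUltrametricDist K :=
  isUltrametricDist_of_forall_norm_natCast_le_one fun n ↦ by
    rw [← map_natCast (algebraMap L K), hnorm]
    exact norm_natCast_le_one L n

section Ultrametric

variable {K : Type*} [NormedField K] [IsUltrametricDist K]

theorem norm_add_one_pow_sub_one_sub_pow_le {p : ℕ} (hp : p.Prime) {t : K} (ht : ‖t‖ ≤ 1) :
    ‖(t + 1) ^ p - 1 - t ^ p‖ ≤ ‖(p : K)‖ * ‖t‖ := by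
  obtain ⟨q, rfl⟩ := Nat.exists_eq_succ_of_ne_zero hp.ne_zero
  have hexpand : (t + 1) ^ (q + 1) - 1 - t ^ (q + 1) =
      ∑ k ∈ range q, t ^ (k + 1) * ((q + 1).choose (k + 1) : K) := by
    rw [add_pow, sum_range_succ, sum_range_succ']
    simp only [one_pow, mul_one, pow_zero, Nat.choose_self, Nat.choose_zero_right, Nat.cast_one,
      Nat.sub_self]
    ring
  rw [hexpand]
  refine norm_sum_le_of_forall_le_of_nonneg (by positivity) fun k hk ↦ ?_
  obtain ⟨c, hc⟩ := hp.dvd_choose_self k.succ_ne_zero (by simpa using hk)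
  rw [hc, Nat.cast_mul, norm_mul, norm_mul, norm_pow, mul_comm]
  gcongr
  · exact mul_le_of_le_one_right (norm_nonneg _) (norm_natCast_le_one K c)
  · exact pow_le_of_le_one (norm_nonneg t) ht k.succ_ne_zero

theorem norm_sub_one_le_one_of_norm_pow_sub_one_lt_one {n : ℕ} (hn : n ≠ 0) {y : K}
    (hy : ‖y ^ n - 1‖ < 1) : ‖y - 1‖ ≤ 1 := by
  have hyn : ‖y ^ n‖ = 1 := by
    rw [← sub_add_cancel (y ^ n) 1, norm_add_eq_max_of_norm_ne_norm (by simpa using hy.ne),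
      norm_one, max_eq_right hy.le]
  have hy1 : ‖y‖ = 1 := by rwa [norm_pow, pow_eq_one_iff_of_nonneg (norm_nonneg y) hn] at hyn
  simpa [sub_eq_add_neg, hy1] using norm_add_le_max y (-1)

end Ultrametric

section Uniformizer

variable {K : Type*} [NormedField K] {π : K}

theorem norm_eq_zpow_of_zpow_add_one_lt_of_le (hπ0 : π ≠ 0)
    (hπmax : ∀ y : K, ‖y‖ < 1 → ‖y‖ ≤ ‖π‖) {z : K} {k : ℤ} (hlow : ‖π‖ ^ (k + 1) < ‖z‖)
    (hup : ‖z‖ ≤ ‖π‖ ^ k) : ‖z‖ = ‖π‖ ^ k := by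
  have hπk : 0 < ‖π‖ ^ k := zpow_pos (norm_pos_iff.mpr hπ0) k
  have hw : ‖z / π ^ k‖ = ‖z‖ / ‖π‖ ^ k := by rw [norm_div, norm_zpow]
  have hwle : ‖z / π ^ k‖ ≤ 1 := hw ▸ div_le_one_of_le₀ hup hπk.le
  have hwgt : ‖π‖ < ‖z / π ^ k‖ := by
    rwa [hw, lt_div_iff₀ hπk, ← zpow_one_add₀ (norm_ne_zero_iff.mpr hπ0), add_comm]
  have hw1 : ‖z / π ^ k‖ = 1 := hwle.eq_or_lt.resolve_right fun h ↦ (hπmax _ h).not_gt hwgt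
  rwa [hw, div_eq_one_iff_eq hπk.ne'] at hw1

theorem exists_norm_eq_zpow (hπ0 : π ≠ 0) (hπ1 : ‖π‖ < 1)
    (hπmax : ∀ y : K, ‖y‖ < 1 → ‖y‖ ≤ ‖π‖) {z : K} (hz : z ≠ 0) : ∃ k : ℤ, ‖z‖ = ‖π‖ ^ k := by
  have hπpos : 0 < ‖π‖ := norm_pos_iff.mpr hπ0
  obtain ⟨n, hlow, hup⟩ := exists_mem_Ioc_zpow (norm_pos_iff.mpr hz) ((one_lt_inv₀ hπpos).mpr hπ1)
  rw [inv_zpow'] at hlow hup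
  refine ⟨-(n + 1), norm_eq_zpow_of_zpow_add_one_lt_of_le hπ0 hπmax ?_ hup⟩
  simpa using hlow

end Uniformizer

theorem Nat.Prime.dvd_or_mul_le_of_norm_add_one_pow_sub_one_eq {K : Type*} [NormedField K]
    [IsUltrametricDist K] {p : ℕ} (hp : p.Prime) {π : K} (hπ0 : π ≠ 0) (hπ1 : ‖π‖ < 1)
    (hπmax : ∀ y : K, ‖y‖ < 1 → ‖y‖ ≤ ‖π‖) {e : ℕ} (he : ‖(p : K)‖ = ‖π‖ ^ e) {t : K}
    (ht : ‖t‖ ≤ 1) {n : ℕ} (hn : ‖(t + 1) ^ p - 1‖ = ‖π‖ ^ n) :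
    p ∣ n ∨ p * e ≤ (p - 1) * n := by
  have hπpos : 0 < ‖π‖ := norm_pos_iff.mpr hπ0
  have ht0 : t ≠ 0 := by
    rintro rfl
    simp only [zero_add, one_pow, sub_self, norm_zero] at hn
    exact (pow_pos hπpos n).ne hn
  obtain ⟨a, ha⟩ := exists_norm_eq_zpow hπ0 hπ1 hπmax ht0
  have hsplit : (t + 1) ^ p - 1 = t ^ p + ((t + 1) ^ p - 1 - t ^ p) := by ring
  have hpow : ‖t ^ p‖ = ‖π‖ ^ ((p : ℤ) * a) := by
    rw [norm_pow, ha, ← zpow_natCast, ← zpow_mul, mul_comm]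
  have hrest : ‖(t + 1) ^ p - 1 - t ^ p‖ ≤ ‖π‖ ^ ((e : ℤ) + a) := by
    calc _ ≤ ‖(p : K)‖ * ‖t‖ := norm_add_one_pow_sub_one_sub_pow_le hp ht
      _ = _ := by rw [he, ha, zpow_add₀ hπpos.ne', zpow_natCast]
  have hn' : ‖(t + 1) ^ p - 1‖ = ‖π‖ ^ (n : ℤ) := by rw [hn, zpow_natCast]
  rcases lt_or_ge ((p : ℤ) * a) (e + a) with hlt | hge
  · have hrest_lt : ‖(t + 1) ^ p - 1 - t ^ p‖ < ‖t ^ p‖ := by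
      rw [hpow]
      exact hrest.trans_lt ((zpow_lt_zpow_iff_right_of_lt_one₀ hπpos hπ1).mpr hlt)
    rw [hsplit, norm_add_eq_max_of_norm_ne_norm hrest_lt.ne', max_eq_left hrest_lt.le, hpow] at hn'
    left
    exact Int.natCast_dvd_natCast.mp ⟨a, zpow_right_injective₀ hπpos hπ1.ne hn'.symm⟩
  · have hle : ‖π‖ ^ (n : ℤ) ≤ ‖π‖ ^ ((e : ℤ) + a) := by
      rw [← hn', hsplit]
      refine (norm_add_le_max _ _).trans (max_le ?_ hrest)
      rw [hpow]
      exact (zpow_le_zpow_iff_right_of_lt_one₀ hπpos hπ1).mpr hge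
    have hean : (e : ℤ) + a ≤ n := (zpow_le_zpow_iff_right_of_lt_one₀ hπpos hπ1).mp hle
    have hp1 : (0 : ℤ) ≤ p - 1 := by linarith [hp.one_le]
    right
    zify [hp.one_le]
    nlinarith [mul_le_mul_of_nonneg_left hean hp1]

theorem pth_power_congruence_improves_general (p : ℕ) [hp : Fact p.Prime] (M : Type*) [NormedField M]
    [Algebra ℚ_[p] M]
    (hnorm : ∀ y : ℚ_[p], ‖algebraMap ℚ_[p] M y‖ = ‖y‖)
    (π : M) (hπ0 : π ≠ 0) (hπ1 : ‖π‖ < 1) (hπmax : ∀ y : M, ‖y‖ < 1 → ‖y‖ ≤ ‖π‖)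
    (e : ℕ) (he : ‖(p : M)‖ = ‖π‖ ^ e)
    (m : ℕ) (hmp : ¬ p ∣ m) (hm : (p - 1) * m < p * e)
    (x : M) (hxp : ∃ y : M, y ≠ 0 ∧ x = y ^ p) (hxm : ‖x - 1‖ ≤ ‖π‖ ^ m) :
    ‖x - 1‖ ≤ ‖π‖ ^ (m + 1) := by
  have := isUltrametricDist_of_norm_algebraMap_eq hnorm
  by_contra! hlt
  have hx : ‖x - 1‖ = ‖π‖ ^ m := by
    exact_mod_cast norm_eq_zpow_of_zpow_add_one_lt_of_le hπ0 hπmax (k := m)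
      (by exact_mod_cast hlt) (by exact_mod_cast hxm)
  obtain ⟨y, -, rfl⟩ := hxp
  have hm0 : m ≠ 0 := by
    rintro rfl
    exact hmp (dvd_zero p)
  have hy : ‖y - 1‖ ≤ 1 := norm_sub_one_le_one_of_norm_pow_sub_one_lt_one hp.out.ne_zero
    (hx ▸ pow_lt_one₀ (norm_nonneg π) hπ1 hm0)
  rcases hp.out.dvd_or_mul_le_of_norm_add_one_pow_sub_one_eq hπ0 hπ1 hπmax he hy
    (by rwa [sub_add_cancel]) with hdvd | hle
  · exact hmp hdvd
  · exact hm.not_ge hle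

/-- Let `M` be a finite extension of `ℚ_p` with the unique absolute value extending the
`p`-adic one, `π` a uniformizer and `e` the absolute ramification index (`‖p‖ = ‖π‖^e`).
Let `m` be a positive integer with `p ∤ m` and `m < pe/(p-1)` (i.e. `(p-1)m < pe`).
Then every `p`-th power in `M^×` lying in `1 + π^m O_M` already lies in
`1 + π^{m+1} O_M`; membership in `1 + π^k O_M` is expressed as `‖x - 1‖ ≤ ‖π‖^k`. -/
theorem pth_power_congruence_improves (p : ℕ) [hp : Fact p.Prime] (M : Type*) [NormedField M]
    [Algebra ℚ_[p] M] [FiniteDimensional ℚ_[p] M]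
    (hnorm : ∀ y : ℚ_[p], ‖algebraMap ℚ_[p] M y‖ = ‖y‖)
    (π : M) (hπ0 : π ≠ 0) (hπ1 : ‖π‖ < 1) (hπmax : ∀ y : M, ‖y‖ < 1 → ‖y‖ ≤ ‖π‖)
    (e : ℕ) (he : ‖(p : M)‖ = ‖π‖ ^ e)
    (m : ℕ) (hm0 : 0 < m) (hmp : ¬ p ∣ m) (hm : (p - 1) * m < p * e)
    (x : M) (hxp : ∃ y : M, y ≠ 0 ∧ x = y ^ p) (hxm : ‖x - 1‖ ≤ ‖π‖ ^ m) :
    ‖x - 1‖ ≤ ‖π‖ ^ (m + 1) :=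
  pth_power_congruence_improves_general p (hp := hp) M hnorm π hπ0 hπ1 hπmax e he m hmp hm x hxp hxm
end

section
/- Let p be an odd prime and M a finite extension of ℚ_p that is tamely ramified over ℚ_p (its absolute ramification index e is prime to p) and contains an element δ with δ^{p−1} = −p (equivalently, M contains a primitive p-th root of unity). Let l be the residue field of O_M. Then for every β ∈ O_M with image β̄ ∈ l, one has 1 + βδ^p ∈ (M^×)^p if and only if Tr_{l/𝔽_p}(β̄) = 0. -/
/-! Since `p * δ = -δ ^ p`, the linear term of the binomial expansion cancels and
`(1 + x * δ) ^ p ≡ 1 + (x ^ p - x) * δ ^ p` modulo `δ ^ (p + 1)`. Every `p`-th root of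
`1 + β * δ ^ p` is of the form `1 + x * δ` with `x` integral, since otherwise `(z - 1) ^ p` would
dominate the expansion of `z ^ p - 1`; and every `u` with `‖u - 1‖ < ‖δ‖ ^ p` is a `p`-th power, by
a contraction argument for `t ↦ (1 + t) ^ p` (Hensel's lemma). Hence `1 + β * δ ^ p` is a `p`-th
power iff `β ≡ x ^ p - x` modulo the maximal ideal for some integral `x`. In a finite field of
characteristic `p` the image of `x ↦ x ^ p - x` is the kernel of the trace: it lies in the kernel
because the trace is Frobenius-invariant, and both have index `p`, the kernel of `x ↦ x ^ p - x`
having at most `p` elements. -/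

open Finset Metric Polynomial IsUltrametricDist

section ArtinSchreier

variable {p : ℕ} [hp : Fact p.Prime] {l : Type*} [Field l] [Finite l] [Algebra (ZMod p) l]

theorem FiniteField.trace_pow_char (y : l) :
    Algebra.trace (ZMod p) l (y ^ p) = Algebra.trace (ZMod p) l y := by
  have := Algebra.trace_eq_of_algEquiv (FiniteField.frobeniusAlgEquivOfAlgebraic (ZMod p) l) y
  rwa [FiniteField.coe_frobeniusAlgEquivOfAlgebraic, ZMod.card] at this

theorem ncard_setOf_pow_eq_self_le {K : Type*} [Field K] {n : ℕ} (hn : 1 < n) :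
    {x : K | x ^ n = x}.ncard ≤ n := by
  have h := (X ^ n - X : K[X]).ncard_rootSet_le K
  rw [FiniteField.X_pow_card_sub_X_natDegree_eq K hn] at h
  convert h using 2
  ext x
  simp [mem_rootSet, FiniteField.X_pow_card_sub_X_ne_zero K hn, sub_eq_zero]

theorem FiniteField.exists_pow_sub_self_eq_iff_trace_eq_zero [CharP l p] (c : l) :
    (∃ x : l, x ^ p - x = c) ↔ Algebra.trace (ZMod p) l c = 0 := by
  refine ⟨fun ⟨x, hx⟩ => by rw [← hx, map_sub, FiniteField.trace_pow_char, sub_self], fun hc => ?_⟩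
  let Tr := (Algebra.trace (ZMod p) l).toAddMonoidHom
  let F : l →+ Tr.ker :=
    { toFun x := ⟨x ^ p - x, by simp [Tr, FiniteField.trace_pow_char]⟩
      map_zero' := by ext; simp [zero_pow hp.out.ne_zero]
      map_add' x y := by ext; simp only [add_pow_char]; push_cast; ring }
  have hTr : Nat.card Tr.ker * p = Nat.card l := by
    rw [← Tr.ker.card_mul_index, AddSubgroup.index_ker,
      AddMonoidHom.range_eq_top_of_surjective Tr (Algebra.trace_surjective (ZMod p) l),
      Nat.card_congr AddSubgroup.topEquiv.toEquiv, Nat.card_zmod]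
  have hF : Nat.card F.ker ≤ p := by
    calc Nat.card F.ker = {x : l | x ^ p = x}.ncard := by
          rw [← SetLike.coe_sort_coe, Nat.card_coe_set_eq]
          congr 1
          ext x
          simp [F, Subtype.ext_iff, sub_eq_zero]
      _ ≤ p := ncard_setOf_pow_eq_self_le hp.out.one_lt
  obtain ⟨x, hx⟩ := AddMonoidHom.surjective_of_card_ker_le_div F
    (by rwa [← hTr, Nat.mul_div_cancel_left _ Nat.card_pos]) ⟨c, hc⟩
  exact ⟨x, congrArg Subtype.val hx⟩

end ArtinSchreier

theorem IsUltrametricDist.norm_sub_le_max {E : Type*} [SeminormedAddGroup E] [IsUltrametricDist E]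
    (a b : E) : ‖a - b‖ ≤ max ‖a‖ ‖b‖ := by
  simpa [sub_eq_add_neg] using norm_add_le_max a (-b)

def binomMiddle {R : Type*} [Semiring R] (p : ℕ) (t : R) : R :=
  ∑ k ∈ Ico 2 p, (p.choose k : R) * t ^ k

theorem one_add_pow_eq_binomMiddle {R : Type*} [CommSemiring R] {p : ℕ} (hp : 2 ≤ p) (t : R) :
    (1 + t) ^ p = 1 + p * t + binomMiddle p t + t ^ p := by
  rw [add_comm 1 t, add_pow, sum_range_succ, ← sum_range_add_sum_Ico _ hp, binomMiddle]
  simp [sum_range_succ, mul_comm]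

section Ultrametric

variable {K : Type*} [NormedField K] [IsUltrametricDist K]

theorem norm_one_add_of_norm_lt_one {a : K} (ha : ‖a‖ < 1) : ‖1 + a‖ = 1 := by
  rw [norm_add_eq_max_of_norm_ne_norm (by simpa using ha.ne'), norm_one, max_eq_left ha.le]

theorem norm_pow_sub_pow_le {t t' : K} {c : ℝ} (ht : ‖t‖ ≤ c) (ht' : ‖t'‖ ≤ c) (k : ℕ) :
    ‖t ^ k - t' ^ k‖ ≤ c ^ (k - 1) * ‖t - t'‖ := by
  have hc : 0 ≤ c := (norm_nonneg t).trans ht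
  rw [← geom_sum₂_mul, norm_mul]
  gcongr
  refine norm_sum_le_of_forall_le_of_nonneg (by positivity) fun i hi => ?_
  rw [norm_mul, norm_pow, norm_pow, ← pow_mul_pow_sub c (Nat.le_sub_one_of_lt (mem_range.mp hi))]
  gcongr

theorem norm_choose_le_norm_natCast {p k : ℕ} (hp : p.Prime) (hk0 : k ≠ 0) (hkp : k < p) :
    ‖(p.choose k : K)‖ ≤ ‖(p : K)‖ := by
  obtain ⟨m, hm⟩ := hp.dvd_choose_self hk0 hkp
  rw [hm, Nat.cast_mul, norm_mul]
  exact mul_le_of_le_one_right (norm_nonneg _) (norm_natCast_le_one K m)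

theorem norm_binomMiddle_sub_le {p : ℕ} (hp : p.Prime) {t t' : K} {c : ℝ} (hc : c ≤ 1)
    (ht : ‖t‖ ≤ c) (ht' : ‖t'‖ ≤ c) :
    ‖binomMiddle p t - binomMiddle p t'‖ ≤ ‖(p : K)‖ * c * ‖t - t'‖ := by
  have hc0 : 0 ≤ c := (norm_nonneg t).trans ht
  rw [binomMiddle, binomMiddle, ← sum_sub_distrib]
  refine norm_sum_le_of_forall_le_of_nonneg (by positivity) fun k hk => ?_
  obtain ⟨hk2, hkp⟩ := mem_Ico.mp hk
  rw [← mul_sub, norm_mul, mul_assoc]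
  gcongr
  · exact norm_choose_le_norm_natCast hp (by omega) hkp
  · calc ‖t ^ k - t' ^ k‖ ≤ c ^ (k - 1) * ‖t - t'‖ := norm_pow_sub_pow_le ht ht' k
      _ ≤ c * ‖t - t'‖ := by gcongr; exact pow_le_of_le_one hc0 hc (by omega)

theorem norm_binomMiddle_le {p : ℕ} (hp : p.Prime) {t : K} (ht : ‖t‖ ≤ 1) :
    ‖binomMiddle p t‖ ≤ ‖(p : K)‖ * ‖t‖ ^ 2 := by
  have h0 : binomMiddle p (0 : K) = 0 :=
    sum_eq_zero fun k hk => by simp [zero_pow (by grind : k ≠ 0)]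
  simpa [h0, sq, mul_assoc] using norm_binomMiddle_sub_le hp (t' := 0) ht le_rfl (by simp)

theorem exists_eq_of_norm_sub_sub_mul_le [CompleteSpace K] {f : K → K} {a y : K} {c q : ℝ}
    (ha : a ≠ 0) (hq0 : 0 ≤ q) (hq1 : q < 1) (hf0 : f 0 = 0)
    (hf : ∀ t ∈ closedBall (0 : K) c, ∀ t' ∈ closedBall (0 : K) c,
      ‖f t - f t' - a * (t - t')‖ ≤ q * ‖a‖ * ‖t - t'‖)
    (hy : ‖y‖ ≤ ‖a‖ * c) :
    ∃ t ∈ closedBall (0 : K) c, f t = y := by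
  have ha0 : 0 < ‖a‖ := norm_pos_iff.mpr ha
  have hc : 0 ≤ c := nonneg_of_mul_nonneg_right ((norm_nonneg y).trans hy) ha0
  -- Newton's iteration with the frozen derivative `a`
  set φ : K → K := fun t => t - (f t - y) / a
  have hφ : ∀ t t', φ t - φ t' = -((f t - f t' - a * (t - t')) / a) := fun t t' => by
    simp only [φ]; field_simp; ring
  have hlip : ∀ t ∈ closedBall (0 : K) c, ∀ t' ∈ closedBall (0 : K) c,
      ‖φ t - φ t'‖ ≤ q * ‖t - t'‖ := fun t ht t' ht' => by
    rw [hφ, norm_neg, norm_div, div_le_iff₀ ha0]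
    linarith [hf t ht t' ht']
  have hmaps : Set.MapsTo φ (closedBall 0 c) (closedBall 0 c) := fun t ht => by
    have h0 : φ 0 = y / a := by simp [φ, hf0, neg_div]
    rw [mem_closedBall_zero_iff] at ht ⊢
    calc ‖φ t‖ = ‖(φ t - φ 0) + y / a‖ := by rw [h0, sub_add_cancel]
      _ ≤ max ‖φ t - φ 0‖ ‖y / a‖ := norm_add_le_max _ _
      _ ≤ c := max_le ?_ ?_
    · calc ‖φ t - φ 0‖ ≤ q * ‖t - 0‖ := hlip t (by simpa) 0 (by simpa)
        _ ≤ c := by rw [sub_zero]; nlinarith [norm_nonneg t]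
    · rwa [norm_div, div_le_iff₀ ha0, mul_comm]
  have hcontr : ContractingWith q.toNNReal (hmaps.restrict φ _ _) :=
    ⟨Real.toNNReal_lt_one.mpr hq1, (LipschitzOnWith.of_dist_le_mul fun t ht t' ht' => by
      simpa [dist_eq_norm, Real.coe_toNNReal _ hq0] using hlip t ht t' ht').mapsToRestrict hmaps⟩
  obtain ⟨t, ht, hfix, -⟩ := hcontr.exists_fixedPoint' isClosed_closedBall.isComplete hmaps
    (mem_closedBall_self hc) (edist_ne_top _ _)
  refine ⟨t, ht, ?_⟩
  have : (f t - y) / a = 0 := by simpa [φ] using hfix.eq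
  rwa [div_eq_zero_iff, or_iff_left ha, sub_eq_zero] at this

end Ultrametric

section PthPowers

variable {K : Type*} [NormedField K] {p : ℕ} {δ : K}

theorem norm_natCast_eq_norm_pow (hδ : δ ^ (p - 1) = -p) : ‖(p : K)‖ = ‖δ‖ ^ (p - 1) := by
  rw [← norm_pow, hδ, norm_neg]

variable [hp : Fact p.Prime]

theorem ne_zero_of_pow_sub_one_eq (hδ : δ ^ (p - 1) = -p) (hp0 : (p : K) ≠ 0) : δ ≠ 0 := by
  rintro rfl
  rw [zero_pow (by have := hp.out.two_le; omega)] at hδ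
  exact hp0 (neg_eq_zero.mp hδ.symm)

theorem norm_lt_one_of_pow_sub_one_eq (hδ : δ ^ (p - 1) = -p) (hp1 : ‖(p : K)‖ < 1) : ‖δ‖ < 1 :=
  (pow_lt_one_iff_of_nonneg (norm_nonneg δ) (by have := hp.out.two_le; omega)).mp
    (norm_natCast_eq_norm_pow hδ ▸ hp1)

variable [IsUltrametricDist K]

theorem norm_le_one_of_pow_sub_one_eq (hδ : δ ^ (p - 1) = -p) : ‖δ‖ ≤ 1 :=
  (pow_le_one_iff_of_nonneg (norm_nonneg δ) (by have := hp.out.two_le; omega)).mp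
    (norm_natCast_eq_norm_pow hδ ▸ norm_natCast_le_one K p)

theorem norm_one_add_pow_sub_one_add_pow_sub_le (hδ : δ ^ (p - 1) = -p) {q : ℝ} (hq0 : 0 ≤ q)
    (hq1 : q ≤ 1) {t t' : K} (ht : ‖t‖ ≤ ‖δ‖ * q) (ht' : ‖t'‖ ≤ ‖δ‖ * q) :
    ‖(1 + t) ^ p - (1 + t') ^ p - p * (t - t')‖ ≤ q * ‖(p : K)‖ * ‖t - t'‖ := by
  have hp2 := hp.out.two_le
  have hδ1 := norm_le_one_of_pow_sub_one_eq hδ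
  have hsplit : (1 + t) ^ p - (1 + t') ^ p - p * (t - t') =
      (binomMiddle p t - binomMiddle p t') + (t ^ p - t' ^ p) := by
    rw [one_add_pow_eq_binomMiddle hp2, one_add_pow_eq_binomMiddle hp2]; ring
  rw [hsplit]
  refine (norm_add_le_max _ _).trans (max_le ?_ ?_)
  · calc _ ≤ ‖(p : K)‖ * (‖δ‖ * q) * ‖t - t'‖ :=
          norm_binomMiddle_sub_le hp.out (mul_le_one₀ hδ1 hq0 hq1) ht ht'
      _ ≤ q * ‖(p : K)‖ * ‖t - t'‖ := by
        rw [mul_comm q]; gcongr; exact mul_le_of_le_one_left hq0 hδ1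
  · calc _ ≤ (‖δ‖ * q) ^ (p - 1) * ‖t - t'‖ := norm_pow_sub_pow_le ht ht' p
      _ ≤ q * ‖(p : K)‖ * ‖t - t'‖ := by
        rw [mul_pow, ← norm_natCast_eq_norm_pow hδ, mul_comm q]; gcongr
        exact pow_le_of_le_one hq0 hq1 (by omega)

theorem exists_pow_eq_of_norm_sub_one_lt [CompleteSpace K] (hδ : δ ^ (p - 1) = -p) {u : K}
    (hu : ‖u - 1‖ < ‖δ‖ ^ p) : ∃ z : K, z ^ p = u := by
  have hsp : 0 < ‖δ‖ ^ p := (norm_nonneg _).trans_lt hu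
  have hs0 : 0 < ‖δ‖ :=
    lt_of_pow_lt_pow_left₀ p (norm_nonneg δ) (by rwa [zero_pow hp.out.ne_zero])
  have hp0 : (p : K) ≠ 0 := norm_pos_iff.mp (norm_natCast_eq_norm_pow hδ ▸ by positivity)
  set q := ‖u - 1‖ / ‖δ‖ ^ p
  have hq0 : 0 ≤ q := by positivity
  have hq1 : q < 1 := (div_lt_one hsp).mpr hu
  obtain ⟨t, -, hft⟩ := exists_eq_of_norm_sub_sub_mul_le (f := fun t => (1 + t) ^ p - 1)
    (y := u - 1) (c := ‖δ‖ * q) hp0 hq0 hq1 (by simp)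
    (fun t ht t' ht' => by
      rw [sub_sub_sub_cancel_right]
      exact norm_one_add_pow_sub_one_add_pow_sub_le hδ hq0 hq1.le
        (mem_closedBall_zero_iff.mp ht) (mem_closedBall_zero_iff.mp ht'))
    (by rw [norm_natCast_eq_norm_pow hδ, ← mul_assoc, pow_sub_one_mul hp.out.ne_zero,
      mul_div_cancel₀ _ hsp.ne'])
  exact ⟨1 + t, sub_left_inj.mp hft⟩

theorem norm_one_add_mul_pow_sub_le (hδ : δ ^ (p - 1) = -p) {x : K} (hx : ‖x‖ ≤ 1) :
    ‖(1 + x * δ) ^ p - (1 + (x ^ p - x) * δ ^ p)‖ ≤ ‖δ‖ ^ (p + 1) := by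
  have hδ1 := norm_le_one_of_pow_sub_one_eq hδ
  have hmiddle : (1 + x * δ) ^ p - (1 + (x ^ p - x) * δ ^ p) = binomMiddle p (x * δ) := by
    rw [one_add_pow_eq_binomMiddle hp.out.two_le, mul_pow, ← pow_sub_one_mul hp.out.ne_zero δ, hδ]
    ring
  have hxδ : ‖x * δ‖ ≤ ‖δ‖ := by rw [norm_mul]; exact mul_le_of_le_one_left (norm_nonneg δ) hx
  calc _ ≤ ‖(p : K)‖ * ‖x * δ‖ ^ 2 := hmiddle ▸ norm_binomMiddle_le hp.out (hxδ.trans hδ1)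
    _ ≤ ‖δ‖ ^ (p - 1) * ‖δ‖ ^ 2 := by rw [norm_natCast_eq_norm_pow hδ]; gcongr
    _ = ‖δ‖ ^ (p + 1) := by rw [← pow_add]; congr 1; have := hp.out.two_le; omega

theorem norm_sub_one_le_of_norm_pow_sub_one_le (hδ : δ ^ (p - 1) = -p) {z : K}
    (hz : ‖z ^ p - 1‖ ≤ ‖δ‖ ^ p) : ‖z - 1‖ ≤ ‖δ‖ := by
  have hp2 := hp.out.two_le
  have hδ1 := norm_le_one_of_pow_sub_one_eq hδ
  have hz1 : ‖z‖ ≤ 1 := by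
    refine (pow_le_one_iff_of_nonneg (norm_nonneg z) hp.out.ne_zero).mp ?_
    rw [← norm_pow, ← sub_add_cancel (z ^ p) 1]
    exact (norm_add_le_max _ _).trans
      (max_le (hz.trans (pow_le_one₀ (norm_nonneg _) hδ1)) norm_one.le)
  set w := z - 1
  have hw1 : ‖w‖ ≤ 1 := (norm_sub_le_max z 1).trans (max_le hz1 norm_one.le)
  by_contra! hδw
  have hw0 : 0 < ‖w‖ := (norm_nonneg δ).trans_lt hδw
  -- then `w ^ p` dominates the other terms of `(1 + w) ^ p - 1`
  have hlower : ‖p * w + binomMiddle p w‖ < ‖w‖ ^ p := by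
    refine (norm_add_le_max _ _).trans_lt (max_lt ?_ ?_) <;>
      rw [← pow_sub_one_mul hp.out.ne_zero ‖w‖]
    · rw [norm_mul, norm_natCast_eq_norm_pow hδ]
      gcongr
      omega
    · calc _ ≤ ‖(p : K)‖ * ‖w‖ ^ 2 := norm_binomMiddle_le hp.out hw1
        _ ≤ ‖δ‖ ^ (p - 1) * ‖w‖ := by
          rw [norm_natCast_eq_norm_pow hδ, sq]; gcongr; exact mul_le_of_le_one_left hw0.le hw1
        _ < _ := by gcongr; omega
  have hexp : w ^ p = (z ^ p - 1) - (p * w + binomMiddle p w) := by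
    rw [← sub_add_cancel z 1, add_comm _ (1 : K), one_add_pow_eq_binomMiddle hp2]; ring
  have := (norm_sub_le_max _ _).trans_lt
    (max_lt (hz.trans_lt (pow_lt_pow_left₀ hδw (norm_nonneg δ) hp.out.ne_zero)) hlower)
  rw [← hexp, norm_pow] at this
  exact lt_irrefl _ this

theorem exists_norm_sub_pow_sub_self_lt_one_of_pow_eq (hδ : δ ^ (p - 1) = -p) (hδ0 : δ ≠ 0)
    (hδ1 : ‖δ‖ < 1) {β z : K} (hβ : ‖β‖ ≤ 1) (hz : 1 + β * δ ^ p = z ^ p) :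
    ∃ x : K, ‖x‖ ≤ 1 ∧ ‖β - (x ^ p - x)‖ < 1 := by
  have hz1 : ‖z - 1‖ ≤ ‖δ‖ := by
    refine norm_sub_one_le_of_norm_pow_sub_one_le hδ ?_
    rw [← hz, add_sub_cancel_left, norm_mul, norm_pow]
    exact mul_le_of_le_one_left (by positivity) hβ
  set x := (z - 1) / δ
  have hzx : z = 1 + x * δ := by simp [x, hδ0]
  have hx : ‖x‖ ≤ 1 := by rw [norm_div]; exact div_le_one_of_le₀ hz1 (norm_nonneg δ)
  refine ⟨x, hx, ?_⟩
  have hkey : (β - (x ^ p - x)) * δ ^ p = (1 + x * δ) ^ p - (1 + (x ^ p - x) * δ ^ p) := by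
    rw [← hzx, ← hz]; ring
  have := hkey ▸ norm_one_add_mul_pow_sub_le hδ hx
  rw [norm_mul, norm_pow, pow_succ, mul_comm (‖δ‖ ^ p)] at this
  exact (le_of_mul_le_mul_right this (by positivity)).trans_lt hδ1

theorem exists_pow_eq_of_norm_sub_pow_sub_self_lt_one [CompleteSpace K] (hδ : δ ^ (p - 1) = -p)
    (hδ0 : δ ≠ 0) (hδ1 : ‖δ‖ < 1) {β x : K} (hβ : ‖β‖ ≤ 1) (hx : ‖x‖ ≤ 1)
    (hg : ‖β - (x ^ p - x)‖ < 1) : ∃ z : K, z ≠ 0 ∧ 1 + β * δ ^ p = z ^ p := by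
  have hs0 : 0 < ‖δ‖ := norm_pos_iff.mpr hδ0
  set A := 1 + x * δ
  have hA : ‖A ^ p‖ = 1 := by
    rw [norm_pow, norm_one_add_of_norm_lt_one, one_pow]
    rw [norm_mul]
    exact (mul_le_of_le_one_left hs0.le hx).trans_lt hδ1
  have hA0 : A ^ p ≠ 0 := norm_ne_zero_iff.mp (hA ▸ one_ne_zero)
  have hdiff : 1 + β * δ ^ p - A ^ p =
      (β - (x ^ p - x)) * δ ^ p - (A ^ p - (1 + (x ^ p - x) * δ ^ p)) := by ring
  have hu : ‖(1 + β * δ ^ p) / A ^ p - 1‖ < ‖δ‖ ^ p := by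
    rw [div_sub_one hA0, norm_div, hA, div_one, hdiff]
    refine (norm_sub_le_max _ _).trans_lt (max_lt ?_ ?_)
    · rw [norm_mul, norm_pow]; exact mul_lt_of_lt_one_left (by positivity) hg
    · exact (norm_one_add_mul_pow_sub_le hδ hx).trans_lt
        (pow_lt_pow_right_of_lt_one₀ hs0 hδ1 (Nat.lt_succ_self p))
  obtain ⟨y, hy⟩ := exists_pow_eq_of_norm_sub_one_lt hδ hu
  have hz : 1 + β * δ ^ p = (y * A) ^ p := by rw [mul_pow, hy, div_mul_cancel₀ _ hA0]
  have hne : 1 + β * δ ^ p ≠ 0 := by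
    refine norm_ne_zero_iff.mp (ne_of_eq_of_ne (norm_one_add_of_norm_lt_one ?_) one_ne_zero)
    rw [norm_mul, norm_pow]
    exact mul_lt_one_of_nonneg_of_lt_one_right hβ (by positivity)
      (pow_lt_one₀ hs0.le hδ1 hp.out.ne_zero)
  exact ⟨y * A, fun h => hne (by rw [hz, h, zero_pow hp.out.ne_zero]), hz⟩

theorem exists_pow_eq_one_add_mul_pow_iff [CompleteSpace K] (hδ : δ ^ (p - 1) = -p)
    (hδ0 : δ ≠ 0) (hδ1 : ‖δ‖ < 1) {β : K} (hβ : ‖β‖ ≤ 1) :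
    (∃ z : K, z ≠ 0 ∧ 1 + β * δ ^ p = z ^ p) ↔ ∃ x : K, ‖x‖ ≤ 1 ∧ ‖β - (x ^ p - x)‖ < 1 :=
  ⟨fun ⟨_, _, hz⟩ => exists_norm_sub_pow_sub_self_lt_one_of_pow_eq hδ hδ0 hδ1 hβ hz,
    fun ⟨_, hx, hg⟩ => exists_pow_eq_of_norm_sub_pow_sub_self_lt_one hδ hδ0 hδ1 hβ hx hg⟩

end PthPowers

section Residue

variable {M l : Type*} [NormedField M] [CommRing l] {ρ : M → l}

theorem residue_sub [IsUltrametricDist M]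
    (hadd : ∀ x y : M, ‖x‖ ≤ 1 → ‖y‖ ≤ 1 → ρ (x + y) = ρ x + ρ y) {x y : M}
    (hx : ‖x‖ ≤ 1) (hy : ‖y‖ ≤ 1) : ρ (x - y) = ρ x - ρ y := by
  rw [eq_sub_iff_add_eq, ← hadd _ _ ((norm_sub_le_max x y).trans (max_le hx hy)) hy,
    sub_add_cancel]

theorem residue_pow (hmul : ∀ x y : M, ‖x‖ ≤ 1 → ‖y‖ ≤ 1 → ρ (x * y) = ρ x * ρ y)
    (hone : ρ 1 = 1) {x : M} (hx : ‖x‖ ≤ 1) (n : ℕ) : ρ (x ^ n) = ρ x ^ n := by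
  induction n with
  | zero => simpa using hone
  | succ n ih =>
    rw [pow_succ, pow_succ, hmul _ _ (by rw [norm_pow]; exact pow_le_one₀ (norm_nonneg x) hx) hx,
      ih]

theorem residue_eq_iff_norm_sub_lt_one [IsUltrametricDist M]
    (hadd : ∀ x y : M, ‖x‖ ≤ 1 → ‖y‖ ≤ 1 → ρ (x + y) = ρ x + ρ y)
    (hker : ∀ x : M, ‖x‖ ≤ 1 → (ρ x = 0 ↔ ‖x‖ < 1)) {x y : M} (hx : ‖x‖ ≤ 1) (hy : ‖y‖ ≤ 1) :
    ρ x = ρ y ↔ ‖x - y‖ < 1 := by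
  rw [← sub_eq_zero, ← residue_sub hadd hx hy, hker _ ((norm_sub_le_max x y).trans (max_le hx hy))]

theorem residue_pow_sub_self_eq_iff [IsUltrametricDist M]
    (hadd : ∀ x y : M, ‖x‖ ≤ 1 → ‖y‖ ≤ 1 → ρ (x + y) = ρ x + ρ y)
    (hmul : ∀ x y : M, ‖x‖ ≤ 1 → ‖y‖ ≤ 1 → ρ (x * y) = ρ x * ρ y) (hone : ρ 1 = 1)
    (hker : ∀ x : M, ‖x‖ ≤ 1 → (ρ x = 0 ↔ ‖x‖ < 1)) (n : ℕ) {x y : M} (hx : ‖x‖ ≤ 1)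
    (hy : ‖y‖ ≤ 1) : ρ x ^ n - ρ x = ρ y ↔ ‖y - (x ^ n - x)‖ < 1 := by
  have hxn : ‖x ^ n‖ ≤ 1 := by rw [norm_pow]; exact pow_le_one₀ (norm_nonneg x) hx
  rw [← residue_pow hmul hone hx, ← residue_sub hadd hxn hx, eq_comm,
    residue_eq_iff_norm_sub_lt_one hadd hker hy ((norm_sub_le_max _ _).trans (max_le hxn hx))]

end Residue

theorem pth_power_iff_trace_zero_general (p : ℕ) [hp : Fact p.Prime] (M : Type*)
    [NormedField M] [Algebra ℚ_[p] M] [FiniteDimensional ℚ_[p] M]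
    (hnorm : ∀ y : ℚ_[p], ‖algebraMap ℚ_[p] M y‖ = ‖y‖)
    (δ : M) (hδ : δ ^ (p - 1) = -(p : M))
    (l : Type*) [Field l] [Finite l] [CharP l p] [Algebra (ZMod p) l]
    (ρ : M → l)
    (hadd : ∀ x y : M, ‖x‖ ≤ 1 → ‖y‖ ≤ 1 → ρ (x + y) = ρ x + ρ y)
    (hmul : ∀ x y : M, ‖x‖ ≤ 1 → ‖y‖ ≤ 1 → ρ (x * y) = ρ x * ρ y)
    (hone : ρ 1 = 1)
    (hsurj : ∀ c : l, ∃ x : M, ‖x‖ ≤ 1 ∧ ρ x = c)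
    (hker : ∀ x : M, ‖x‖ ≤ 1 → (ρ x = 0 ↔ ‖x‖ < 1)) :
    ∀ β : M, ‖β‖ ≤ 1 →
      ((∃ z : M, z ≠ 0 ∧ 1 + β * δ ^ p = z ^ p) ↔
        Algebra.trace (ZMod p) l (ρ β) = 0) := by
  intro β hβ
  let _ : NormedAlgebra ℚ_[p] M :=
    { norm_smul_le c x := by rw [Algebra.smul_def, norm_mul, hnorm] }
  have := IsUltrametricDist.of_normedAlgebra ℚ_[p] (L := M)
  have := FiniteDimensional.complete ℚ_[p] M
  have hpM : ‖(p : M)‖ = (p : ℝ)⁻¹ := by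
    rw [← map_natCast (algebraMap ℚ_[p] M), hnorm, Padic.norm_p]
  have hδ0 := ne_zero_of_pow_sub_one_eq hδ (norm_ne_zero_iff.mp (by simp [hpM, hp.out.ne_zero]))
  have hδ1 := norm_lt_one_of_pow_sub_one_eq hδ
    (hpM ▸ inv_lt_one_of_one_lt₀ (Nat.one_lt_cast.mpr hp.out.one_lt))
  have hres := fun {x} (hx : ‖x‖ ≤ 1) => residue_pow_sub_self_eq_iff hadd hmul hone hker p hx hβ
  rw [exists_pow_eq_one_add_mul_pow_iff hδ hδ0 hδ1 hβ,
    ← FiniteField.exists_pow_sub_self_eq_iff_trace_eq_zero]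
  constructor
  · rintro ⟨x, hx, hg⟩
    exact ⟨ρ x, (hres hx).mpr hg⟩
  · rintro ⟨c, hc⟩
    obtain ⟨x, hx, rfl⟩ := hsurj c
    exact ⟨x, hx, (hres hx).mp hc⟩

/-- Let `p` be an odd prime and `M` a finite extension of `ℚ_p` (with the unique
absolute value extending the `p`-adic one) which is tamely ramified, i.e. whose
absolute ramification index `e` (defined by `‖p‖ = ‖π‖^e` for a uniformizer `π`)
is prime to `p`, and which contains an element `δ` with `δ^{p-1} = -p`.  Let `l`
be the residue field of `O_M`, formalized by a reduction map `ρ : M → l` which is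
additive and multiplicative on `O_M = {x : ‖x‖ ≤ 1}`, sends `1` to `1`, is
surjective onto `l`, and whose kernel on `O_M` is the maximal ideal
`{x : ‖x‖ < 1}`.  Then for every `β ∈ O_M`, one has `1 + βδ^p ∈ (M^×)^p` if and
only if `Tr_{l/𝔽_p}(ρ β) = 0`. -/
theorem pth_power_iff_trace_zero (p : ℕ) [hp : Fact p.Prime] (hp2 : p ≠ 2) (M : Type*)
    [NormedField M] [Algebra ℚ_[p] M] [FiniteDimensional ℚ_[p] M]
    (hnorm : ∀ y : ℚ_[p], ‖algebraMap ℚ_[p] M y‖ = ‖y‖)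
    (π : M) (hπ0 : π ≠ 0) (hπ1 : ‖π‖ < 1) (hπmax : ∀ y : M, ‖y‖ < 1 → ‖y‖ ≤ ‖π‖)
    (e : ℕ) (he : ‖(p : M)‖ = ‖π‖ ^ e) (htame : ¬ p ∣ e)
    (δ : M) (hδ : δ ^ (p - 1) = -(p : M))
    (l : Type*) [Field l] [Finite l] [CharP l p] [Algebra (ZMod p) l]
    (ρ : M → l)
    (hadd : ∀ x y : M, ‖x‖ ≤ 1 → ‖y‖ ≤ 1 → ρ (x + y) = ρ x + ρ y)
    (hmul : ∀ x y : M, ‖x‖ ≤ 1 → ‖y‖ ≤ 1 → ρ (x * y) = ρ x * ρ y)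
    (hone : ρ 1 = 1)
    (hsurj : ∀ c : l, ∃ x : M, ‖x‖ ≤ 1 ∧ ρ x = c)
    (hker : ∀ x : M, ‖x‖ ≤ 1 → (ρ x = 0 ↔ ‖x‖ < 1)) :
    ∀ β : M, ‖β‖ ≤ 1 →
      ((∃ z : M, z ≠ 0 ∧ 1 + β * δ ^ p = z ^ p) ↔
        Algebra.trace (ZMod p) l (ρ β) = 0) :=
  pth_power_iff_trace_zero_general p (hp := hp) M hnorm δ hδ l ρ hadd hmul hone hsurj hker
end

section
/- Let (a_0, …, a_{f−1}) be a tame signature for a prime p and integer f ≥ 1. Then for every subset J ⊆ ℤ/fℤ, the set μ(J) is admissible. -/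
open scoped Classical

/-- `a : ℤ → ℕ` represents a tame signature `(a_0, …, a_{f−1}) ∈ {1,…,p}^f` (not all
entries equal to `p`), with the indices extended to all of `ℤ` by `f`-periodicity. -/
def IsTameSignature (p f : ℕ) (a : ℤ → ℕ) : Prop :=
  0 < f ∧ (∀ j : ℤ, a (j + f) = a j) ∧ (∀ j : ℤ, 1 ≤ a j ∧ a j ≤ p) ∧ ∃ j : ℤ, a j ≠ p

/-- `([i], [i+t])` with `1 ≤ t ≤ f−1` is a dependent pair if `a_{i+1} = p`,
`a_{i+t+1} ≠ p`, and for some `s ∈ {1,…,t}` one has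
`a_{i+2} = ⋯ = a_{i+s} = p−1` and `a_{i+s+1} = ⋯ = a_{i+t} = p`. -/
def IsDependentPair (p f : ℕ) (a : ℤ → ℕ) (x y : ZMod f) : Prop :=
  ∃ i t : ℤ, 1 ≤ t ∧ t ≤ (f : ℤ) - 1 ∧ x = (i : ZMod f) ∧ y = ((i + t : ℤ) : ZMod f) ∧
    a (i + 1) = p ∧ a (i + t + 1) ≠ p ∧
    ∃ s : ℤ, 1 ≤ s ∧ s ≤ t ∧
      (∀ m : ℤ, i + 2 ≤ m → m ≤ i + s → a m = p - 1) ∧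
      (∀ m : ℤ, i + s + 1 ≤ m → m ≤ i + t → a m = p)

/-- A subset `J ⊆ ℤ/fℤ` is admissible if for every dependent pair `([j],[i])` with
`[i] ∈ J` one also has `[j] ∈ J`. -/
def SigAdmissible (p f : ℕ) (a : ℤ → ℕ) (J : Set (ZMod f)) : Prop :=
  ∀ x y : ZMod f, IsDependentPair p f a x y → y ∈ J → x ∈ J

/-- The shifting function `δ : ℤ → ℤ`: `δ(j) = j` unless
`(a_{i+1}, a_{i+2}, …, a_j) = (p, p−1, …, p−1)` for some (necessarily unique) `i < j`,
in which case `δ(j) = i`. -/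
noncomputable def sigDelta (p : ℕ) (a : ℤ → ℕ) (j : ℤ) : ℤ :=
  if h : ∃ i : ℤ, i < j ∧ a (i + 1) = p ∧ ∀ m : ℤ, i + 1 < m → m ≤ j → a m = p - 1
  then h.choose else j

/-- The map `ℤ/fℤ → ℤ/fℤ` induced by `δ`. -/
noncomputable def sigDeltaBar (p f : ℕ) (a : ℤ → ℕ) (x : ZMod f) : ZMod f :=
  ((sigDelta p a (x.val : ℤ) : ℤ) : ZMod f)

/-- The set `μ(J) = {[i_1], …, [i_r]}` produced by the construction from a chosen
starting integer `i₁` (whose class lies in `δ(J) ∖ J`): `j₁` is the least integer with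
`j₁ > i₁`, `[j₁] ∈ J` and `δ(j₁) = i₁`; writing `J = {[j_1],…,[j_r]}` with
`j_1 < ⋯ < j_r < j_1 + f`, one sets inductively `i_κ = δ(j_κ)` if `i_{κ−1} < δ(j_κ)`
and `i_κ = j_κ` otherwise. -/
noncomputable def sigMuFrom (p f : ℕ) (a : ℤ → ℕ) (J : Set (ZMod f)) (i₁ : ℤ) :
    Set (ZMod f) :=
  let j₁ : ℤ :=
    if h : ∃ j : ℤ, (i₁ < j ∧ (j : ZMod f) ∈ J ∧ sigDelta p a j = i₁) ∧
        ∀ j' : ℤ, (i₁ < j' ∧ (j' : ZMod f) ∈ J ∧ sigDelta p a j' = i₁) → j ≤ j'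
    then h.choose else i₁ + 1
  -- the representatives of `J` in the window `[j₁, j₁ + f)`, in increasing order:
  -- `jSeq κ` is the `(κ+1)`-st smallest, i.e. `j_{κ+1}` in the notation above
  let jSeq : ℕ → ℤ := fun κ =>
    j₁ + (Nat.nth (fun v : ℕ => ∃ x ∈ J, (x - (j₁ : ZMod f)).val = v) κ : ℤ)
  let iSeq : ℕ → ℤ := fun κ =>
    Nat.rec (motive := fun _ => ℤ) i₁
      (fun κ' ih =>
        if ih < sigDelta p a (jSeq (κ' + 1)) then sigDelta p a (jSeq (κ' + 1))
        else jSeq (κ' + 1)) κ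
  { y : ZMod f | ∃ κ : ℕ, κ < J.ncard ∧ y = (Int.cast (iSeq κ) : ZMod f) }

/-- The set `μ(J)`: if `δ(J) ⊆ J` then `μ(J) = J`; otherwise it is produced by the
construction `sigMuFrom` applied to a choice of `[i₁] ∈ δ(J) ∖ J`. -/
noncomputable def sigMu (p f : ℕ) (a : ℤ → ℕ) (J : Set (ZMod f)) : Set (ZMod f) :=
  if sigDeltaBar p f a '' J ⊆ J then J
  else if h : ∃ i : ℤ, (i : ZMod f) ∈ (sigDeltaBar p f a '' J) \ J
    then sigMuFrom p f a J h.choose else J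

/-!
On a dependent run at `c` (`a_{c+1} = p`, then `p - 1` up to `c + s`, then `p` up to `c + t`,
and `a_{c+t+1} ≠ p`), `δ` sends `(c, c + s]` to `c` and is `m ↦ m - 1` on `(c + s, c + t]`; so on
the window `(c, c + t]` it satisfies `c ≤ δ m < m`, and it is strictly increasing where it
exceeds `c`. If `δ(J) ⊆ J`, iterating `δ` from `c + t` stays in `J` and reaches `c`. Otherwise,
suppose `[c + t] = [i_κ]` (after shifting `c` by a multiple of `f`, `i_κ = c + t`). Since
`a_{c+t+1} ≠ p`, the value `c + t` is not of the form `δ(j) < j`, so `κ > 0` and the `else`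
branch was taken: `i_κ = j_κ = c + t` and `δ(j_κ) ≤ i_{κ-1}`. Going backwards, as long as
`i_L > c` the step to `i_L` cannot have been an `if` step (by the monotonicity of `δ` on the
window), so `i_L = j_L` lies in the window and `c ≤ δ(j_L) ≤ i_{L-1}`; the strictly
decreasing `i_L` must therefore reach `c`.
-/

open Function

theorem Function.Periodic.int_mul_int {α : Type*} {a : ℤ → α} {T : ℤ} (ha : Periodic a T)
    (k : ℤ) : Periodic a (k * T) := by
  simpa using ha.int_mul k

section DeltaRun

variable {p : ℕ} {a : ℤ → ℕ}

def IsDeltaRun (p : ℕ) (a : ℤ → ℕ) (i j : ℤ) : Prop :=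
  i < j ∧ a (i + 1) = p ∧ ∀ m : ℤ, i + 1 < m → m ≤ j → a m = p - 1

theorem IsDeltaRun.eq (hp : 0 < p) {i i' j : ℤ} (h : IsDeltaRun p a i j)
    (h' : IsDeltaRun p a i' j) : i = i' := by
  rcases lt_trichotomy i i' with hlt | heq | hlt
  · have := h.2.2 (i' + 1) (by omega) (by linarith [h'.1])
    have := h'.2.1
    omega
  · exact heq
  · have := h'.2.2 (i + 1) (by omega) (by linarith [h.1])
    have := h.2.1
    omega

theorem sigDelta_eq_of_isDeltaRun (hp : 0 < p) {i j : ℤ} (h : IsDeltaRun p a i j) :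
    sigDelta p a j = i := by
  have hex : ∃ i, IsDeltaRun p a i j := ⟨i, h⟩
  exact (dif_pos hex).trans (hex.choose_spec.eq hp h)

theorem sigDelta_eq_self_or_isDeltaRun (j : ℤ) :
    sigDelta p a j = j ∨ IsDeltaRun p a (sigDelta p a j) j := by
  unfold sigDelta
  split_ifs with h
  · exact Or.inr h.choose_spec
  · exact Or.inl rfl

theorem sigDelta_le (j : ℤ) : sigDelta p a j ≤ j :=
  (sigDelta_eq_self_or_isDeltaRun j).elim le_of_eq fun h => h.1.le

theorem sigDelta_ne_of_lt {n j : ℤ} (hn : a (n + 1) ≠ p) (hj : sigDelta p a j < j) :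
    sigDelta p a j ≠ n := by
  rintro rfl
  exact hn ((sigDelta_eq_self_or_isDeltaRun j).resolve_left hj.ne).2.1

theorem IsDeltaRun.add_period {T i j : ℤ} (ha : Periodic a T) (h : IsDeltaRun p a i j) :
    IsDeltaRun p a (i + T) (j + T) := by
  refine ⟨by linarith [h.1], by rw [add_right_comm, ha]; exact h.2.1, fun m hm hmj => ?_⟩
  rw [← ha.sub_eq]
  exact h.2.2 _ (by omega) (by omega)

theorem sigDelta_add_period (hp : 0 < p) {T : ℤ} (ha : Periodic a T) (j : ℤ) :
    sigDelta p a (j + T) = sigDelta p a j + T := by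
  rcases sigDelta_eq_self_or_isDeltaRun (p := p) (a := a) j with hj | hj
  · rcases sigDelta_eq_self_or_isDeltaRun (p := p) (a := a) (j + T) with hjT | hjT
    · rw [hjT, hj]
    · have hrun := hjT.add_period ha.neg
      rw [add_neg_cancel_right] at hrun
      have := sigDelta_eq_of_isDeltaRun hp hrun
      have := hjT.1
      omega
  · exact sigDelta_eq_of_isDeltaRun hp (hj.add_period ha)

theorem sigDeltaBar_intCast {f : ℕ} [NeZero f] (hp : 0 < p) (ha : Periodic a f) (m : ℤ) :
    sigDeltaBar p f a m = (sigDelta p a m : ZMod f) := by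
  have hval : (((m : ZMod f).val : ℕ) : ℤ) = m + -(m / f) * f := by
    rw [ZMod.val_intCast, Int.emod_def]
    ring
  rw [sigDeltaBar, hval, sigDelta_add_period hp (ha.int_mul_int (-(m / f)))]
  simp

end DeltaRun

section DependentRun

variable {p : ℕ} {a : ℤ → ℕ} {c t : ℤ}

def IsDependentRun (p : ℕ) (a : ℤ → ℕ) (c t : ℤ) : Prop :=
  a (c + 1) = p ∧ a (c + t + 1) ≠ p ∧
    ∃ s : ℤ, 1 ≤ s ∧ s ≤ t ∧
      (∀ m : ℤ, c + 2 ≤ m → m ≤ c + s → a m = p - 1) ∧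
      (∀ m : ℤ, c + s + 1 ≤ m → m ≤ c + t → a m = p)

theorem IsDependentRun.pos (h : IsDependentRun p a c t) : 0 < t := by
  obtain ⟨-, -, s, hs, hst, -⟩ := h
  omega

theorem IsDependentRun.add_period {T : ℤ} (ha : Periodic a T) (h : IsDependentRun p a c t) :
    IsDependentRun p a (c + T) t := by
  obtain ⟨h1, hne, s, hs, hst, hmid, htail⟩ := h
  refine ⟨by rw [add_right_comm, ha, h1], by rwa [add_right_comm c, add_right_comm _ T, ha],
    s, hs, hst, fun m hm hms => ?_, fun m hm hmt => ?_⟩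
  · rw [← ha.sub_eq]
    exact hmid _ (by omega) (by omega)
  · rw [← ha.sub_eq]
    exact htail _ (by omega) (by omega)

theorem IsDependentPair.exists_run {f : ℕ} (ha : Periodic a f) {x y : ZMod f}
    (h : IsDependentPair p f a x y) {n : ℤ} (hn : (n : ZMod f) = y) :
    ∃ c t : ℤ, x = c ∧ n = c + t ∧ IsDependentRun p a c t := by
  obtain ⟨i, t, -, -, rfl, rfl, hrun⟩ := h
  obtain ⟨k, hk⟩ := (ZMod.intCast_eq_intCast_iff_dvd_sub _ _ _).mp hn.symm
  exact ⟨i + k * f, t, by simp, by linarith, IsDependentRun.add_period (ha.int_mul_int k) hrun⟩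

theorem IsDependentRun.sigDelta_eq (hp : 0 < p) (h : IsDependentRun p a c t) :
    ∃ s : ℤ, ∀ m : ℤ, c < m → m ≤ c + t →
      sigDelta p a m = if m ≤ c + s then c else m - 1 := by
  obtain ⟨h1, -, s, -, -, hmid, htail⟩ := h
  refine ⟨s, fun m hcm hmt => ?_⟩
  split_ifs with hms
  · exact sigDelta_eq_of_isDeltaRun hp
      ⟨hcm, h1, fun m' hm' hm'm => hmid m' (by omega) (by omega)⟩
  · exact sigDelta_eq_of_isDeltaRun hp
      ⟨by omega, by rw [sub_add_cancel]; exact htail m (by omega) hmt, fun _ _ _ => by omega⟩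

theorem IsDependentRun.sigDelta_mem_Ico (hp : 0 < p) (h : IsDependentRun p a c t) :
    ∀ m ∈ Set.Ioc c (c + t), sigDelta p a m ∈ Set.Ico c m := by
  obtain ⟨s, hs⟩ := h.sigDelta_eq hp
  rintro m ⟨hcm, hmt⟩
  rw [hs m hcm hmt, Set.mem_Ico]
  split_ifs <;> omega

theorem IsDependentRun.sigDelta_lt_sigDelta (hp : 0 < p) (h : IsDependentRun p a c t) :
    ∀ m ∈ Set.Ioc c (c + t), ∀ m' ∈ Set.Ioc c (c + t), m < m' → c < sigDelta p a m →
      sigDelta p a m < sigDelta p a m' := by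
  obtain ⟨s, hs⟩ := h.sigDelta_eq hp
  rintro m ⟨hcm, hmt⟩ m' ⟨hcm', hm't⟩ hmm' hc
  rw [hs m hcm hmt] at hc ⊢
  rw [hs m' hcm' hm't]
  split_ifs at hc ⊢ <;> omega

end DependentRun

section Descent

variable {D : ℤ → ℤ} {c t : ℤ}

theorem base_of_window_descent {P : ℤ → Prop} (hP : ∀ m, P m → P (D m))
    (hwin : ∀ m ∈ Set.Ioc c (c + t), D m ∈ Set.Ico c m) (n : ℕ) (hnt : (n : ℤ) ≤ t)
    (hn : P (c + n)) : P c := by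
  induction n using Nat.strong_induction_on with
  | _ n ih =>
    rcases Nat.eq_zero_or_pos n with rfl | hpos
    · simpa using hn
    obtain ⟨hc, hlt⟩ := hwin (c + n) ⟨by omega, by omega⟩
    refine ih (D (c + n) - c).toNat (by omega) (by omega) ?_
    rw [Int.toNat_of_nonneg (by omega), add_sub_cancel]
    exact hP _ hn

/-- The sequence `i_κ` of the construction of `μ(J)`, for an arbitrary map `D` in place of `δ`
and an arbitrary sequence `j` in place of the representatives `j_κ`. -/
def muSeq (D : ℤ → ℤ) (j : ℕ → ℤ) (i₁ : ℤ) (κ : ℕ) : ℤ :=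
  Nat.rec (motive := fun _ => ℤ) i₁
    (fun κ' ih => if ih < D (j (κ' + 1)) then D (j (κ' + 1)) else j (κ' + 1)) κ

variable {j : ℕ → ℤ} {i₁ : ℤ} {r : ℕ}

theorem muSeq_zero : muSeq D j i₁ 0 = i₁ := rfl

theorem muSeq_succ (κ : ℕ) :
    muSeq D j i₁ (κ + 1) =
      if muSeq D j i₁ κ < D (j (κ + 1)) then D (j (κ + 1)) else j (κ + 1) := rfl

theorem muSeq_le (hD : ∀ m, D m ≤ m) (h0 : i₁ ≤ j 0) (κ : ℕ) : muSeq D j i₁ κ ≤ j κ := by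
  cases κ with
  | zero => exact h0
  | succ κ =>
    rw [muSeq_succ]
    split_ifs
    exacts [hD _, le_rfl]

/-- An `if` step to a value above `c` would contradict the strict monotonicity of `D` on the
window, so going down from `L` every step is an `else` step until the value `c` is reached. -/
theorem muSeq_descent (hD : ∀ m, D m ≤ m) (hj : StrictMonoOn j (Set.Iio r)) (h0 : D (j 0) = i₁)
    (hwin : ∀ m ∈ Set.Ioc c (c + t), c ≤ D m)
    (hmono : ∀ m ∈ Set.Ioc c (c + t), ∀ m' ∈ Set.Ioc c (c + t), m < m' → c < D m → D m < D m')
    (L : ℕ)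
    (hLr : L + 1 < r) (hc : c ≤ muSeq D j i₁ L) (hlt : muSeq D j i₁ L < j (L + 1))
    (hjt : j (L + 1) ≤ c + t) (hDj : D (j (L + 1)) ≤ muSeq D j i₁ L) :
    ∃ L' ≤ L, muSeq D j i₁ L' = c := by
  have hle := muSeq_le hD (h0 ▸ hD (j 0))
  have hjlt : ∀ κ, κ + 1 < r → j κ < j (κ + 1) := fun κ hκ =>
    hj (show κ < r by omega) hκ (Nat.lt_succ_self κ)
  have no_if_branch : ∀ κ, κ + 1 < r → c < muSeq D j i₁ κ → muSeq D j i₁ κ = D (j κ) →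
      j (κ + 1) ≤ c + t → D (j (κ + 1)) ≤ muSeq D j i₁ κ → False := by
    intro κ hκ hc hi hjt hDj
    have hcj : c < j κ := hc.trans_le (hle κ)
    have hjκ := hjlt κ hκ
    have := hmono (j κ) ⟨hcj, by omega⟩ (j (κ + 1)) ⟨by omega, hjt⟩ hjκ (hi ▸ hc)
    omega
  induction L with
  | zero =>
    refine ⟨0, le_rfl, ?_⟩
    by_contra hne
    exact no_if_branch 0 hLr (lt_of_le_of_ne hc (Ne.symm hne)) h0.symm hjt hDj
  | succ L ih =>
    by_cases hne : muSeq D j i₁ (L + 1) = c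
    · exact ⟨L + 1, le_rfl, hne⟩
    have hclt := lt_of_le_of_ne hc (Ne.symm hne)
    by_cases hif : muSeq D j i₁ L < D (j (L + 1))
    · have hi : muSeq D j i₁ (L + 1) = D (j (L + 1)) := by rw [muSeq_succ, if_pos hif]
      exact (no_if_branch (L + 1) hLr hclt hi hjt hDj).elim
    · have hi : muSeq D j i₁ (L + 1) = j (L + 1) := by rw [muSeq_succ, if_neg hif]
      have hjL := hjlt (L + 1) hLr
      obtain ⟨L', hL', hL'c⟩ := ih (by omega)
        ((hwin _ ⟨by omega, by omega⟩).trans (not_lt.mp hif))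
        ((hle L).trans_lt (hjlt L (by omega))) (by omega) (not_lt.mp hif)
      exact ⟨L', by omega, hL'c⟩

theorem exists_muSeq_eq_of_muSeq_eq (hD : ∀ m, D m ≤ m) (hj : StrictMonoOn j (Set.Iio r))
    (h0 : D (j 0) = i₁) (h0j : i₁ < j 0) (ht : 0 < t)
    (hwin : ∀ m ∈ Set.Ioc c (c + t), D m ∈ Set.Ico c m)
    (hmono : ∀ m ∈ Set.Ioc c (c + t), ∀ m' ∈ Set.Ioc c (c + t), m < m' → c < D m → D m < D m')
    (hval : ∀ m, D m < m → D m ≠ c + t) {κ : ℕ} (hκ : κ < r)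
    (hκt : muSeq D j i₁ κ = c + t) : ∃ L < r, muSeq D j i₁ L = c := by
  have hct : c + t ∈ Set.Ioc c (c + t) := ⟨by omega, le_rfl⟩
  cases κ with
  | zero => exact (hval (j 0) (h0 ▸ h0j) (h0.trans hκt)).elim
  | succ κ =>
    rw [muSeq_succ] at hκt
    split_ifs at hκt with hif
    · rcases (hD (j (κ + 1))).lt_or_eq with hlt | heq
      · exact (hval _ hlt hκt).elim
      · have := (hwin (c + t) hct).2
        rw [← hκt, heq] at this
        omega
    · have hle := muSeq_le hD (h0 ▸ hD (j 0)) κ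
      have hjκ := hj (show κ < r by omega) hκ (Nat.lt_succ_self κ)
      obtain ⟨L, hL, hLc⟩ := muSeq_descent hD hj h0 (fun m hm => (hwin m hm).1) hmono κ hκ
        ((hwin (c + t) hct).1.trans (hκt ▸ not_lt.mp hif)) (by omega) hκt.le
        (not_lt.mp hif)
      exact ⟨L, by omega, hLc⟩

end Descent

section SigMu

variable {p f : ℕ} {a : ℤ → ℕ}

/-- `windowSeq J j₁ κ` is `j_{κ+1}`, the `(κ+1)`-st smallest representative of `J` in
`[j₁, j₁ + f)`. -/
noncomputable def windowSeq (J : Set (ZMod f)) (j₁ : ℤ) (κ : ℕ) : ℤ :=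
  j₁ + (Nat.nth (fun v : ℕ => ∃ x ∈ J, (x - (j₁ : ZMod f)).val = v) κ : ℤ)

theorem windowSeq_zero {J : Set (ZMod f)} {j₁ : ℤ} (h : (j₁ : ZMod f) ∈ J) :
    windowSeq J j₁ 0 = j₁ := by
  rw [windowSeq, Nat.nth_zero_of_zero ⟨_, h, by rw [sub_self, ZMod.val_zero]⟩]
  simp

theorem windowSeq_strictMonoOn [NeZero f] (J : Set (ZMod f)) (j₁ : ℤ) :
    StrictMonoOn (windowSeq J j₁) (Set.Iio J.ncard) := by
  have himage : {v : ℕ | ∃ x ∈ J, (x - (j₁ : ZMod f)).val = v} =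
      (fun x : ZMod f => (x - (j₁ : ZMod f)).val) '' J := rfl
  have hfin : {v : ℕ | ∃ x ∈ J, (x - (j₁ : ZMod f)).val = v}.Finite :=
    himage ▸ (Set.toFinite J).image _
  have hcard : hfin.toFinset.card = J.ncard := by
    rw [← Set.ncard_eq_toFinset_card _ hfin, himage,
      Set.ncard_image_of_injective J fun x y hxy => sub_left_injective (ZMod.val_injective f hxy)]
  intro κ hκ κ' hκ' h
  have := Nat.nth_strictMonoOn hfin (hcard ▸ hκ : κ < _) (hcard ▸ hκ' : κ' < _) h
  simp only [windowSeq]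
  omega

/-- The integer `j₁` of the construction of `μ(J)` from `i₁`. -/
noncomputable def sigMuStart (p f : ℕ) (a : ℤ → ℕ) (J : Set (ZMod f)) (i₁ : ℤ) : ℤ :=
  if h : ∃ j : ℤ, (i₁ < j ∧ (j : ZMod f) ∈ J ∧ sigDelta p a j = i₁) ∧
      ∀ j' : ℤ, (i₁ < j' ∧ (j' : ZMod f) ∈ J ∧ sigDelta p a j' = i₁) → j ≤ j'
  then h.choose else i₁ + 1

theorem sigMuFrom_eq (J : Set (ZMod f)) (i₁ : ℤ) :
    sigMuFrom p f a J i₁ = {y | ∃ κ < J.ncard,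
      y = (muSeq (sigDelta p a) (windowSeq J (sigMuStart p f a J i₁)) i₁ κ : ZMod f)} :=
  rfl

theorem sigMuStart_spec {J : Set (ZMod f)} {i₁ : ℤ}
    (h : ∃ j : ℤ, i₁ < j ∧ (j : ZMod f) ∈ J ∧ sigDelta p a j = i₁) :
    i₁ < sigMuStart p f a J i₁ ∧ (sigMuStart p f a J i₁ : ZMod f) ∈ J ∧
      sigDelta p a (sigMuStart p f a J i₁) = i₁ := by
  have hex := Int.exists_least_of_bdd ⟨i₁, fun z hz => hz.1.le⟩ h
  rw [sigMuStart, dif_pos hex]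
  exact hex.choose_spec.1

theorem exists_sigDelta_eq_of_mem_diff [NeZero f] (hp : 0 < p) (ha : Periodic a f)
    {J : Set (ZMod f)} {i₁ : ℤ} (h : (i₁ : ZMod f) ∈ sigDeltaBar p f a '' J \ J) :
    ∃ j : ℤ, i₁ < j ∧ (j : ZMod f) ∈ J ∧ sigDelta p a j = i₁ := by
  obtain ⟨⟨x, hxJ, hx⟩, hi₁J⟩ := h
  obtain ⟨m, rfl⟩ := ZMod.intCast_surjective x
  rw [sigDeltaBar_intCast hp ha, ZMod.intCast_eq_intCast_iff_dvd_sub] at hx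
  obtain ⟨k, hk⟩ := hx
  have hmk : ((m + k * f : ℤ) : ZMod f) = m := by simp
  have hδ : sigDelta p a (m + k * f) = i₁ := by
    rw [sigDelta_add_period hp (ha.int_mul_int k)]
    linarith
  refine ⟨m + k * f, lt_of_le_of_ne (hδ ▸ sigDelta_le _) ?_, hmk ▸ hxJ, hδ⟩
  rintro rfl
  exact hi₁J (hmk ▸ hxJ)

theorem sigAdmissible_of_image_subset [NeZero f] (hp : 0 < p) (ha : Periodic a f)
    {K : Set (ZMod f)} (hK : sigDeltaBar p f a '' K ⊆ K) : SigAdmissible p f a K := by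
  intro x y hxy hy
  obtain ⟨n, rfl⟩ := ZMod.intCast_surjective y
  obtain ⟨c, t, rfl, rfl, hrun⟩ := hxy.exists_run ha rfl
  have ht : (t.toNat : ℤ) = t := Int.toNat_of_nonneg hrun.pos.le
  exact base_of_window_descent (P := fun m : ℤ => (m : ZMod f) ∈ K)
    (fun m hm => sigDeltaBar_intCast hp ha m ▸ hK ⟨_, hm, rfl⟩)
    (hrun.sigDelta_mem_Ico hp) t.toNat ht.le (ht ▸ hy)

theorem sigAdmissible_sigMuFrom [NeZero f] (hp : 0 < p) (ha : Periodic a f)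
    {J : Set (ZMod f)} {i₁ : ℤ} (hi₁ : (i₁ : ZMod f) ∈ sigDeltaBar p f a '' J \ J) :
    SigAdmissible p f a (sigMuFrom p f a J i₁) := by
  obtain ⟨hlt, hmem, hδ⟩ := sigMuStart_spec (exists_sigDelta_eq_of_mem_diff hp ha hi₁)
  rw [sigMuFrom_eq]
  rintro x y hxy ⟨κ, hκ, rfl⟩
  obtain ⟨c, t, rfl, hκt, hrun⟩ := hxy.exists_run ha rfl
  obtain ⟨L, hL, hLc⟩ := exists_muSeq_eq_of_muSeq_eq (sigDelta_le (p := p) (a := a))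
    (windowSeq_strictMonoOn J _) (by rwa [windowSeq_zero hmem]) (by rwa [windowSeq_zero hmem])
    hrun.pos (hrun.sigDelta_mem_Ico hp) (hrun.sigDelta_lt_sigDelta hp)
    (fun _ => sigDelta_ne_of_lt hrun.2.1) hκ hκt
  exact ⟨L, hL, by rw [hLc]⟩

end SigMu

theorem sigMu_admissible_general (p f : ℕ) (a : ℤ → ℕ)
    (hsig : IsTameSignature p f a) (J : Set (ZMod f)) :
    SigAdmissible p f a (sigMu p f a J) := by
  obtain ⟨hf, ha, hbound, -⟩ := hsig
  have hp : 0 < p := (hbound 0).1.trans (hbound 0).2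
  have : NeZero f := ⟨hf.ne'⟩
  unfold sigMu
  split_ifs with hsub hex
  · exact sigAdmissible_of_image_subset hp ha hsub
  · exact sigAdmissible_sigMuFrom hp ha hex.choose_spec
  · obtain ⟨x, hxJ, hx⟩ := Set.not_subset.mp hsub
    obtain ⟨i, rfl⟩ := ZMod.intCast_surjective x
    exact (hex ⟨i, hxJ, hx⟩).elim

/-- For every tame signature `(a_0,…,a_{f−1})` and every subset `J ⊆ ℤ/fℤ`, the set
`μ(J)` is admissible. -/
theorem sigMu_admissible (p f : ℕ) (a : ℤ → ℕ) (hp : p.Prime)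
    (hsig : IsTameSignature p f a) (J : Set (ZMod f)) :
    SigAdmissible p f a (sigMu p f a J) :=
  sigMu_admissible_general p f a hsig J
end

section
/- Let (a_0, …, a_{f−1}) be a tame signature for a prime p and integer f ≥ 1, and let R be the set of j ∈ {0, …, f−1} such that a_j ≠ p−1 and (a_i, a_{i+1}, …, a_{j−1}) = (p, p−1, …, p−1) for some i with j − f ≤ i < j (i.e., a_i = p and a_{i+1} = ⋯ = a_{j−1} = p−1). Then the cardinality of R equals the cardinality of {i ∈ {0, …, f−1} : a_i = p}. -/
open scoped Classical

/-!
Send each position `i` with `a i = p` to `next i`, the first index after `i` where `a` differs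
from `p - 1`. Since `a (i + f) = p ≠ p - 1`, the run of `p - 1`'s after `i` stops within `f`
steps, so `R` is exactly the set of residues of the values `next i`. The map `next` commutes
with translation by `f` and is strictly increasing on positions where `a ≠ p - 1` (if `i < i'`
then `next i ≤ i' < next i'`), hence it induces a bijection between residues.
-/

open Function

/-- The least `j > i` with `T j`; junk value `i` when there is none. -/
noncomputable def nextWhere (T : ℤ → Prop) (i : ℤ) : ℤ :=
  if h : ∃ n : ℕ, T (i + 1 + n) then i + 1 + Nat.find h else i

section nextWhere

variable {T : ℤ → Prop} {i j : ℤ}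

theorem nextWhere_spec (h : ∃ j, i < j ∧ T j) :
    i < nextWhere T i ∧ T (nextWhere T i) ∧ ∀ m, i < m → m < nextWhere T i → ¬T m := by
  obtain ⟨j, hij, hj⟩ := h
  have h : ∃ n : ℕ, T (i + 1 + n) := ⟨(j - i - 1).toNat, by rwa [Int.toNat_of_nonneg (by omega),
    show i + 1 + (j - i - 1) = j by ring]⟩
  rw [nextWhere, dif_pos h]
  refine ⟨by omega, Nat.find_spec h, fun m him hm => ?_⟩
  have hmin := Nat.find_min h (m := (m - i - 1).toNat) (by omega)
  rwa [Int.toNat_of_nonneg (by omega), show i + 1 + (m - i - 1) = m by ring] at hmin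

theorem nextWhere_le (hij : i < j) (hj : T j) : nextWhere T i ≤ j := by
  obtain ⟨-, -, hgap⟩ := nextWhere_spec ⟨j, hij, hj⟩
  by_contra! hlt
  exact hgap j hij hlt hj

theorem nextWhere_eq_of_gap (hij : i < j) (hj : T j) (hgap : ∀ m, i < m → m < j → ¬T m) :
    nextWhere T i = j := by
  obtain ⟨hi, hT, -⟩ := nextWhere_spec ⟨j, hij, hj⟩
  exact le_antisymm (nextWhere_le hij hj) (not_lt.mp fun hlt => hgap _ hi hlt hT)

theorem periodic_nextWhere_sub_self {c : ℤ} (hT : Periodic T c) :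
    Periodic (fun i => nextWhere T i - i) c := by
  intro i
  have hshift : (fun n : ℕ => T (i + c + 1 + n)) = fun n : ℕ => T (i + 1 + n) := by
    funext n
    rw [show i + c + 1 + n = i + 1 + n + c by ring, hT]
  simp only [nextWhere, hshift]
  split_ifs <;> ring

theorem nextWhere_strictMonoOn {c : ℤ} (hT : Periodic T c) (hc : 0 < c) :
    StrictMonoOn (nextWhere T) {i | T i} := by
  intro i _ i' hi' hlt
  calc nextWhere T i ≤ i' := nextWhere_le hlt hi'
    _ < nextWhere T i' := (nextWhere_spec ⟨i' + c, by omega, (hT i').symm ▸ hi'⟩).1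

end nextWhere

/-- Reduction mod `c` turns `g` into a bijection between the residues of `S` and those of
`g '' S`: two points of `S` with congruent images differ by a multiple of `c`. -/
theorem card_filter_Ico_eq_card_filter_image {S : ℤ → Prop} {g : ℤ → ℤ} {c : ℤ} (hc : 0 < c)
    (hS : Periodic S c) (hg : Periodic (fun i => g i - i) c) (hinj : Set.InjOn g {i | S i}) :
    ((Finset.Ico 0 c).filter S).card =
      ((Finset.Ico 0 c).filter fun j => ∃ i, S i ∧ g i = j).card := by
  have hg_sub (i n : ℤ) : g (i - n * c) = g i - n * c := by
    have : g (i - n * c) - (i - n * c) = g i - i := hg.sub_int_mul_eq n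
    linarith
  have hmod_mem (i : ℤ) : i % c ∈ Finset.Ico 0 c :=
    Finset.mem_Ico.mpr ⟨Int.emod_nonneg i hc.ne', Int.emod_lt_of_pos i hc⟩
  refine Finset.card_bij (fun i _ => g i % c) ?_ ?_ ?_
  · intro i hi
    refine Finset.mem_filter.mpr ⟨hmod_mem _, i - g i / c * c, ?_, ?_⟩
    · exact (hS.sub_int_mul_eq _).mpr (Finset.mem_filter.mp hi).2
    · rw [hg_sub, Int.emod_def, mul_comm]
  · intro i₁ hi₁ i₂ hi₂ heq
    obtain ⟨hi₁, hS₁⟩ := Finset.mem_filter.mp hi₁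
    obtain ⟨hi₂, hS₂⟩ := Finset.mem_filter.mp hi₂
    obtain ⟨n, hn⟩ := Int.ModEq.dvd heq
    have hshift : i₁ = i₂ - n * c := by
      refine hinj hS₁ ((hS.sub_int_mul_eq _).mpr hS₂) ?_
      rw [hg_sub]
      linarith
    rw [← Int.emod_eq_of_lt (Finset.mem_Ico.mp hi₁).1 (Finset.mem_Ico.mp hi₁).2,
      ← Int.emod_eq_of_lt (Finset.mem_Ico.mp hi₂).1 (Finset.mem_Ico.mp hi₂).2, hshift,
      Int.sub_mul_emod_self_right]
  · intro j hj
    obtain ⟨hj, i, hSi, rfl⟩ := Finset.mem_filter.mp hj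
    refine ⟨i % c, Finset.mem_filter.mpr ⟨hmod_mem i, ?_⟩, ?_⟩
    · rw [Int.emod_def, mul_comm]
      exact (hS.sub_int_mul_eq _).mpr hSi
    · rw [Int.emod_def i, mul_comm, hg_sub, Int.sub_mul_emod_self_right]
      exact Int.emod_eq_of_lt (Finset.mem_Ico.mp hj).1 (Finset.mem_Ico.mp hj).2

theorem exists_run_iff_eq_nextWhere {p : ℕ} {a : ℤ → ℕ} {c : ℤ} (hp : p ≠ 0) (hc : 0 < c)
    (ha : Periodic a c) (j : ℤ) :
    (a j ≠ p - 1 ∧ ∃ i, j - c ≤ i ∧ i < j ∧ a i = p ∧ ∀ m, i < m → m < j → a m = p - 1) ↔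
      ∃ i, a i = p ∧ nextWhere (a · ≠ p - 1) i = j := by
  have hp1 : p ≠ p - 1 := by omega
  constructor
  · rintro ⟨hj, i, -, hij, hi, hgap⟩
    exact ⟨i, hi, nextWhere_eq_of_gap hij hj fun m him hmj => not_not.mpr (hgap m him hmj)⟩
  · rintro ⟨i, hi, rfl⟩
    have hic : a (i + c) ≠ p - 1 := by rw [ha, hi]; exact hp1
    have hlt : i < i + c := by omega
    obtain ⟨hi_lt, hT, hgap⟩ := nextWhere_spec (T := (a · ≠ p - 1)) (i := i) ⟨i + c, hlt, hic⟩
    have hle := nextWhere_le (T := (a · ≠ p - 1)) hlt hic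
    exact ⟨hT, i, by omega, hi_lt, hi, fun m him hm => not_not.mp (hgap m him hm)⟩

theorem card_R_eq_card_p_general (p f : ℕ) (a : ℤ → ℕ)
    (hsig : IsTameSignature p f a) :
    ((Finset.Icc (0 : ℤ) ((f : ℤ) - 1)).filter fun j =>
        a j ≠ p - 1 ∧ ∃ i : ℤ, j - (f : ℤ) ≤ i ∧ i < j ∧ a i = p ∧
          ∀ m : ℤ, i < m → m < j → a m = p - 1).card =
      ((Finset.Icc (0 : ℤ) ((f : ℤ) - 1)).filter fun i => a i = p).card := by
  obtain ⟨hf, hper : Periodic a (f : ℤ), hbd, -⟩ := hsig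
  have hp : p ≠ 0 := by have := hbd 0; omega
  have hf : (0 : ℤ) < f := Int.natCast_pos.mpr hf
  have hS : Periodic (a · = p) (f : ℤ) := hper.comp (· = p)
  have hT : Periodic (a · ≠ p - 1) (f : ℤ) := hper.comp (· ≠ p - 1)
  have hinj : Set.InjOn (nextWhere (a · ≠ p - 1)) {i | a i = p} :=
    (nextWhere_strictMonoOn hT hf).injOn.mono fun i (hi : a i = p) => show a i ≠ p - 1 by omega
  simp only [Finset.Icc_sub_one_right_eq_Ico, exists_run_iff_eq_nextWhere hp hf hper]
  convert (card_filter_Ico_eq_card_filter_image hf hS (periodic_nextWhere_sub_self hT) hinj).symm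

/-- Let `(a_0,…,a_{f−1})` be a tame signature and let `R` be the set of
`j ∈ {0,…,f−1}` such that `a_j ≠ p−1` and `(a_i, a_{i+1}, …, a_{j−1}) = (p, p−1, …, p−1)`
for some `i` with `j − f ≤ i < j` (i.e. `a_i = p` and `a_{i+1} = ⋯ = a_{j−1} = p−1`).
Then `#R = #{i ∈ {0,…,f−1} : a_i = p}`. -/
theorem card_R_eq_card_p (p f : ℕ) (a : ℤ → ℕ) (hp : p.Prime)
    (hsig : IsTameSignature p f a) :
    ((Finset.Icc (0 : ℤ) ((f : ℤ) - 1)).filter fun j =>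
        a j ≠ p - 1 ∧ ∃ i : ℤ, j - (f : ℤ) ≤ i ∧ i < j ∧ a i = p ∧
          ∀ m : ℤ, i < m → m < j → a m = p - 1).card =
      ((Finset.Icc (0 : ℤ) ((f : ℤ) - 1)).filter fun i => a i = p).card :=
  card_R_eq_card_p_general p f a hsig
end

section
/- Let (a_0, …, a_{f−1}) be a tame signature for a prime p and integer f ≥ 1, and let i be an integer with a_{i+1} = p. Let s ∈ {1, …, f} be minimal such that a_{i+s+1} ≠ p−1 (so a_{i+2} = ⋯ = a_{i+s} = p−1; such s exists since a_{i+f+1} = p ≠ p−1). Then the number of t ∈ {1, …, f−1} such that ([i], [i+t]) is a dependent pair equals s, unless (a_{i+2}, …, a_{i+s}, a_{i+s+1}, …, a_{i+f+1}) = (p−1, …, p−1, p, …, p) (i.e., a_{i+s+1} = ⋯ = a_{i+f+1} = p), in which case it equals s − 1. -/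
open scoped Classical

/-!
For `t < s` the pair `([i], [i+t])` is dependent with witness `t`, because `a_{i+t+1} = p - 1 ≠ p`.
For `t ≥ s` the witness is forced to be `s` (a smaller one would make some `a_{i+s'+1}` both `p`
and `p - 1`, a larger one would make `a_{i+s+1} = p - 1`), so the pair is dependent exactly when
`i + t + 1` is the first index after `i + s` at which `a` differs from `p`. There is one such
`t ≤ f - 1` unless `a_{i+s+1} = ⋯ = a_{i+f+1} = p`; the index `i + f + 1` itself never
qualifies since `a_{i+f+1} = a_{i+1} = p`.
-/

open Finset

theorem card_filter_Icc_first_failure (P : ℤ → Prop) [DecidablePred P] (lo hi : ℤ) :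
    #((Icc lo hi).filter fun t => ¬ P (t + 1) ∧ ∀ m, lo < m → m ≤ t → P m) =
      if ∀ m, lo < m → m ≤ hi + 1 → P m then 0 else 1 := by
  split_ifs with hall
  · refine card_eq_zero.2 (filter_eq_empty_iff.2 fun t ht ⟨hfail, _⟩ => hfail ?_)
    rw [mem_Icc] at ht
    exact hall _ (by omega) (by omega)
  · push Not at hall
    obtain ⟨u, ⟨hlo, hhi, hu⟩, hmin⟩ := Int.exists_least_of_bdd ⟨lo, fun z hz => hz.1.le⟩ hall
    refine card_eq_one.2 ⟨u - 1, ext fun t => ?_⟩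
    simp only [mem_filter, mem_Icc, mem_singleton]
    constructor
    · rintro ⟨⟨hlo', hhi'⟩, hfail, hbefore⟩
      have hut : u ≤ t + 1 := hmin _ ⟨by omega, by omega, hfail⟩
      by_contra hne
      exact hu (hbefore u hlo (by omega))
    · rintro rfl
      refine ⟨⟨by omega, by omega⟩, by simpa using hu, fun m hm hmu => ?_⟩
      by_contra hfail
      have := hmin m ⟨hm, by omega, hfail⟩
      omega

/-- `IsDependentPair` at `([i], [i+t])`, read off the shifted sequence `b m = a (i + m)`. -/
def IsDependentOffset (p : ℕ) (b : ℤ → ℕ) (t : ℤ) : Prop :=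
  b 1 = p ∧ b (t + 1) ≠ p ∧ ∃ s, 1 ≤ s ∧ s ≤ t ∧
    (∀ m, 2 ≤ m → m ≤ s → b m = p - 1) ∧ ∀ m, s + 1 ≤ m → m ≤ t → b m = p

theorem forall_Icc_add_iff (P : ℤ → Prop) (i lo hi : ℤ) :
    (∀ m, lo ≤ m → m ≤ hi → P (i + m)) ↔ ∀ m, i + lo ≤ m → m ≤ i + hi → P m :=
  ⟨fun h m h1 h2 => by simpa using h (m - i) (by omega) (by omega),
    fun h m h1 h2 => h (i + m) (by omega) (by omega)⟩

theorem isDependentOffset_add_iff (p : ℕ) (a : ℤ → ℕ) (i t : ℤ) :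
    IsDependentOffset p (fun m => a (i + m)) t ↔
      a (i + 1) = p ∧ a (i + t + 1) ≠ p ∧ ∃ s, 1 ≤ s ∧ s ≤ t ∧
        (∀ m, i + 2 ≤ m → m ≤ i + s → a m = p - 1) ∧
        ∀ m, i + s + 1 ≤ m → m ≤ i + t → a m = p := by
  simp only [IsDependentOffset, ← add_assoc, forall_Icc_add_iff (fun x => a x = p - 1),
    forall_Icc_add_iff (fun x => a x = p)]

section Count

variable {p : ℕ} {b : ℤ → ℕ} {s : ℤ}

theorem isDependentOffset_of_lt (hp : p ≠ 0) (hb1 : b 1 = p)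
    (hchain : ∀ m, 2 ≤ m → m ≤ s → b m = p - 1) {t : ℤ} (ht : 1 ≤ t) (hts : t < s) :
    IsDependentOffset p b t :=
  ⟨hb1, by rw [hchain (t + 1) (by omega) (by omega)]; omega, t, ht, le_rfl,
    fun m h1 h2 => hchain m h1 (by omega), fun m h1 h2 => by omega⟩

theorem isDependentOffset_iff_of_le (hp : p ≠ 0) (hb1 : b 1 = p) (hs : 1 ≤ s)
    (hchain : ∀ m, 2 ≤ m → m ≤ s → b m = p - 1) (hstop : b (s + 1) ≠ p - 1)
    {t : ℤ} (hst : s ≤ t) :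
    IsDependentOffset p b t ↔ b (t + 1) ≠ p ∧ ∀ m, s < m → m ≤ t → b m = p := by
  constructor
  · rintro ⟨-, hnext, s', hs', hs't, hchain', htail⟩
    obtain rfl : s' = s := by
      rcases lt_trichotomy s' s with hlt | heq | hgt
      · have := hchain (s' + 1) (by omega) (by omega)
        rw [htail (s' + 1) le_rfl (by omega)] at this
        omega
      · exact heq
      · exact absurd (hchain' (s + 1) (by omega) (by omega)) hstop
    exact ⟨hnext, htail⟩
  · rintro ⟨hnext, htail⟩
    exact ⟨hb1, hnext, s, hs, hst, hchain, htail⟩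

theorem le_of_chain (hp : p ≠ 0) {n : ℤ} (hn : 1 ≤ n) (hbn : b (n + 1) = p)
    (hchain : ∀ m, 2 ≤ m → m ≤ s → b m = p - 1) : s ≤ n := by
  by_contra! hns
  have := hchain (n + 1) (by omega) (by omega)
  omega

theorem card_filter_isDependentOffset (hp : p ≠ 0) (hb1 : b 1 = p) (hs : 1 ≤ s)
    (hchain : ∀ m, 2 ≤ m → m ≤ s → b m = p - 1) (hstop : b (s + 1) ≠ p - 1)
    {n : ℤ} (hn : 1 ≤ n) (hbn : b (n + 1) = p) :
    (#((Icc 1 (n - 1)).filter (IsDependentOffset p b)) : ℤ) =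
      if ∀ m, s + 1 ≤ m → m ≤ n + 1 → b m = p then s - 1 else s := by
  have hsn := le_of_chain hp hn hbn hchain
  have hsplit : (Icc 1 (n - 1)).filter (IsDependentOffset p b) = Icc 1 (s - 1) ∪
      (Icc s (n - 1)).filter fun t => ¬ b (t + 1) = p ∧ ∀ m, s < m → m ≤ t → b m = p := by
    ext t
    simp only [mem_filter, mem_union, mem_Icc]
    rcases lt_or_ge t s with hts | hst
    · have := isDependentOffset_of_lt hp hb1 hchain (t := t)
      constructor
      · rintro ⟨⟨h1, -⟩, -⟩; omega
      · rintro (⟨h1, -⟩ | ⟨⟨h1, -⟩, -⟩) <;> exact ⟨⟨by omega, by omega⟩, this (by omega) hts⟩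
    · rw [isDependentOffset_iff_of_le hp hb1 hs hchain hstop hst]
      constructor
      · rintro ⟨⟨-, h2⟩, h⟩; exact Or.inr ⟨⟨hst, h2⟩, h⟩
      · rintro (⟨-, h2⟩ | ⟨⟨h1, h2⟩, h⟩)
        · omega
        · exact ⟨⟨by omega, h2⟩, h⟩
  have hdisj : Disjoint (Icc 1 (s - 1)) ((Icc s (n - 1)).filter fun t =>
      ¬ b (t + 1) = p ∧ ∀ m, s < m → m ≤ t → b m = p) :=
    disjoint_left.2 fun t h1 h2 => by
      simp only [mem_filter, mem_Icc] at h1 h2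
      omega
  have hcond : (∀ m, s < m → m ≤ n - 1 + 1 → b m = p) ↔
      ∀ m, s + 1 ≤ m → m ≤ n + 1 → b m = p :=
    ⟨fun h m h1 h2 => by
      rcases h2.lt_or_eq with h2 | rfl
      · exact h m h1 (by omega)
      · exact hbn,
      fun h m h1 h2 => h m h1 (by omega)⟩
  rw [hsplit, card_union_of_disjoint hdisj,
    card_filter_Icc_first_failure (fun m => b m = p), Int.card_Icc]
  simp only [hcond]
  split_ifs <;> omega

end Count

theorem isDependentPair_intCast_iff {p f : ℕ} {a : ℤ → ℕ} (ha : Function.Periodic a f)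
    {i t : ℤ} (ht1 : 1 ≤ t) (ht2 : t ≤ (f : ℤ) - 1) :
    IsDependentPair p f a (i : ZMod f) ((i + t : ℤ) : ZMod f) ↔
      IsDependentOffset p (fun m => a (i + m)) t := by
  constructor
  · rintro ⟨i', t', ht1', ht2', hi, ht, hdep⟩
    rw [ZMod.intCast_eq_intCast_iff] at hi ht
    obtain rfl : t' = t := by
      have htt' : t ≡ t' [ZMOD f] := ((hi.add_right t).symm.trans ht).add_left_cancel' i'
      rwa [Int.ModEq, Int.emod_eq_of_lt (by omega) (by omega),
        Int.emod_eq_of_lt (by omega) (by omega), eq_comm] at htt'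
    obtain ⟨k, hk⟩ := hi.dvd
    have hshift : (fun m => a (i' + m)) = fun m => a (i + m) := funext fun m => by
      rw [show i' + m = i + m + k * f by linear_combination hk]
      exact ha.int_mul k (i + m)
    rwa [← isDependentOffset_add_iff, hshift] at hdep
  · exact fun hdep => ⟨i, t, ht1, ht2, rfl, rfl, (isDependentOffset_add_iff p a i t).1 hdep⟩

theorem count_dependent_pairs_general (p f : ℕ) (a : ℤ → ℕ)
    (hsig : IsTameSignature p f a) (i s : ℤ)
    (hi : a (i + 1) = p) (hs1 : 1 ≤ s)
    (hchain : ∀ m : ℤ, 2 ≤ m → m ≤ s → a (i + m) = p - 1)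
    (hstop : a (i + s + 1) ≠ p - 1) :
    ((((Finset.Icc (1 : ℤ) ((f : ℤ) - 1)).filter fun t =>
        IsDependentPair p f a (i : ZMod f) ((i + t : ℤ) : ZMod f)).card : ℤ)) =
      if ∀ m : ℤ, s + 1 ≤ m → m ≤ (f : ℤ) + 1 → a (i + m) = p then s - 1 else s := by
  obtain ⟨hf, hper, hbd, -⟩ := hsig
  have hp : p ≠ 0 := by have := (hbd (i + 1)).1; omega
  have hwrap : a (i + (f + 1)) = p := by rw [← add_assoc, add_right_comm, hper, hi]
  rw [filter_congr fun t ht => isDependentPair_intCast_iff hper (mem_Icc.1 ht).1 (mem_Icc.1 ht).2]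
  rw [add_assoc] at hstop
  exact card_filter_isDependentOffset hp hi hs1 hchain hstop (by omega) hwrap

/-- Let `(a_0,…,a_{f−1})` be a tame signature, `i` an integer with `a_{i+1} = p`, and
`s ∈ {1,…,f}` minimal such that `a_{i+s+1} ≠ p−1` (so `a_{i+2} = ⋯ = a_{i+s} = p−1`).
Then the number of `t ∈ {1,…,f−1}` such that `([i],[i+t])` is a dependent pair equals
`s`, unless `a_{i+s+1} = ⋯ = a_{i+f+1} = p`, in which case it equals `s − 1`. -/
theorem count_dependent_pairs (p f : ℕ) (a : ℤ → ℕ) (hp : p.Prime)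
    (hsig : IsTameSignature p f a) (i s : ℤ)
    (hi : a (i + 1) = p) (hs1 : 1 ≤ s) (hsf : s ≤ (f : ℤ))
    (hchain : ∀ m : ℤ, 2 ≤ m → m ≤ s → a (i + m) = p - 1)
    (hstop : a (i + s + 1) ≠ p - 1) :
    ((((Finset.Icc (1 : ℤ) ((f : ℤ) - 1)).filter fun t =>
        IsDependentPair p f a (i : ZMod f) ((i + t : ℤ) : ZMod f)).card : ℤ)) =
      if ∀ m : ℤ, s + 1 ≤ m → m ≤ (f : ℤ) + 1 → a (i + m) = p then s - 1 else s :=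
  count_dependent_pairs_general p f a hsig i s hi hs1 hchain hstop
end
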